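/- arXiv:2005.03078 — 8 statements merged into one kernel-verified Lean document; each statement's English description precedes it below -/
import Mathlib

section
/- For all integers q ≥ t ≥ 2 there exists an integer m₀ such that for every m ≥ m₀ there is a coloring φ of the unordered pairs of the set U = {0, 1, …, ⌊(q/(t-1))^{m/4}⌋ - 1} with q colors such that every subset of U of size m contains pairs of at least t distinct colors. -/
/-!
Counting colorings (Erdős' first-moment argument). Color the pairs of `U`, `|U| = N`, arbitrarily with
`q` colors. A fixed `m`-set sees at most `t - 1` colors for at most
`C(q, t-1) (t-1)^C(m,2) q^(C(N,2) - C(m,2))` colorings, so a good coloring exists as soon as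
`C(N, m) C(q, t-1) (t-1)^C(m,2) < q^C(m,2)`. With `r = q/(t-1)` and `N ≤ r^(m/4)` the left side is
at most `r^(m²/4) C(q, t-1) (t-1)^C(m,2)`, and `C(m,2) - m²/4 = m(m-2)/4` eventually beats
`log_r C(q, t-1)`.
-/

open Finset

section Coloring

variable {ι β : Type*} [Fintype ι] [DecidableEq ι] [Fintype β] [DecidableEq β]

theorem card_filter_forall_mem (s : Finset ι) (T : Finset β) :
    #{f : ι → β | ∀ i ∈ s, f i ∈ T} = #T ^ #s * Fintype.card β ^ (Fintype.card ι - #s) := by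
  have hpi : ({f : ι → β | ∀ i ∈ s, f i ∈ T} : Finset (ι → β))
      = Fintype.piFinset fun i => if i ∈ s then T else univ := by
    ext f
    simp only [mem_filter, mem_univ, true_and, Fintype.mem_piFinset]
    exact forall_congr' fun i => by split_ifs with hi <;> simp [hi]
  rw [hpi, Fintype.card_piFinset]
  simp only [apply_ite card, card_univ]
  rw [prod_ite, prod_const, prod_const, filter_mem_eq_inter, univ_inter, filter_not,
    card_univ_sdiff, filter_mem_eq_inter, univ_inter]

theorem card_filter_card_image_le (s : Finset ι) {u : ℕ} (hu : u ≤ Fintype.card β) :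
    #{f : ι → β | #(s.image f) ≤ u}
      ≤ (Fintype.card β).choose u * (u ^ #s * Fintype.card β ^ (Fintype.card ι - #s)) := by
  have hsub : ({f : ι → β | #(s.image f) ≤ u} : Finset (ι → β))
      ⊆ (powersetCard u (univ : Finset β)).biUnion fun T => {f | ∀ i ∈ s, f i ∈ T} := by
    intro f hf
    obtain ⟨T, hfT, hT⟩ := exists_superset_card_eq (mem_filter.mp hf).2 (by simpa using hu)
    simp only [mem_biUnion, mem_powersetCard_univ, mem_filter, mem_univ, true_and]
    exact ⟨T, hT, fun i hi => hfT (mem_image_of_mem f hi)⟩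
  calc _ ≤ _ := card_le_card hsub
    _ ≤ _ := card_biUnion_le
    _ = _ := by
      rw [sum_congr rfl fun T hT => by rw [card_filter_forall_mem, (mem_powersetCard_univ.mp hT)],
        sum_const, card_powersetCard, card_univ, smul_eq_mul]

theorem exists_forall_lt_card_image [Nonempty β] (F : Finset (Finset ι)) {k u : ℕ}
    (hF : ∀ s ∈ F, #s = k) (hu : u ≤ Fintype.card β)
    (h : #F * (Fintype.card β).choose u * u ^ k < Fintype.card β ^ k) :
    ∃ c : ι → β, ∀ s ∈ F, u < #(s.image c) := by
  set bad := F.biUnion fun s => ({f : ι → β | #(s.image f) ≤ u} : Finset (ι → β))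
  suffices hbad : #bad < #(univ : Finset (ι → β)) by
    obtain ⟨c, -, hc⟩ := exists_mem_notMem_of_card_lt_card hbad
    refine ⟨c, fun s hs => not_le.mp fun hcs => hc ?_⟩
    exact mem_biUnion.mpr ⟨s, hs, mem_filter.mpr ⟨mem_univ c, hcs⟩⟩
  have hβ : 0 < Fintype.card β := Fintype.card_pos
  rw [card_univ, Fintype.card_fun]
  rcases F.eq_empty_or_nonempty with rfl | ⟨s₀, hs₀⟩
  · simp [bad, hβ]
  have hk : k ≤ Fintype.card ι := hF s₀ hs₀ ▸ card_le_univ s₀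
  calc #bad ≤ ∑ s ∈ F, #{f : ι → β | #(s.image f) ≤ u} := card_biUnion_le
    _ ≤ ∑ s ∈ F, (Fintype.card β).choose u * (u ^ k * Fintype.card β ^ (Fintype.card ι - k)) :=
      sum_le_sum fun s hs => hF s hs ▸ card_filter_card_image_le s hu
    _ = #F * (Fintype.card β).choose u * u ^ k * Fintype.card β ^ (Fintype.card ι - k) := by
      rw [sum_const, smul_eq_mul]; ring
    _ < Fintype.card β ^ k * Fintype.card β ^ (Fintype.card ι - k) :=
      Nat.mul_lt_mul_of_pos_right h (pow_pos hβ _)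
    _ = Fintype.card β ^ Fintype.card ι := by rw [← pow_add, Nat.add_sub_cancel' hk]

end Coloring

theorem exists_coloring_pairs_of_choose_mul_lt {N m q u : ℕ} (hu : u ≤ q) (hq : 0 < q)
    (h : N.choose m * q.choose u * u ^ m.choose 2 < q ^ m.choose 2) :
    ∃ φ : Finset ℕ → Fin q, ∀ A ⊆ range N, #A = m → u < #((powersetCard 2 A).image φ) := by
  have : NeZero q := ⟨hq.ne'⟩
  set P := (range N).powersetCard 2
  set pairs : Finset ℕ → Finset P := fun A => (powersetCard 2 A).subtype (· ∈ P)
  have hpairs : ∀ A ⊆ range N, powersetCard 2 A ⊆ P := fun A hA => powersetCard_mono hA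
  have hF : ∀ s ∈ ((range N).powersetCard m).image pairs, #s = m.choose 2 := by
    simp only [mem_image, mem_powersetCard]
    rintro s ⟨A, ⟨hA, rfl⟩, rfl⟩
    rw [card_subtype, filter_true_of_mem fun p hp => hpairs A hA hp, card_powersetCard]
  have hcard : #(((range N).powersetCard m).image pairs) ≤ N.choose m :=
    card_image_le.trans (by rw [card_powersetCard, card_range])
  obtain ⟨c, hc⟩ := exists_forall_lt_card_image (β := Fin q) (u := u) _ hF
    (by rwa [Fintype.card_fin]) (by rw [Fintype.card_fin]; exact lt_of_le_of_lt (by gcongr) h)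
  refine ⟨Function.extend Subtype.val c fun _ => 0, fun A hA hAm => ?_⟩
  refine (hc (pairs A) (mem_image_of_mem _ (mem_powersetCard.mpr ⟨hA, hAm⟩))).trans_le
    (card_le_card ?_)
  simp only [subset_iff, mem_image, mem_subtype, pairs]
  rintro _ ⟨p, hp, rfl⟩
  exact ⟨p, hp, Subtype.val_injective.extend_apply _ _ _⟩

theorem choose_floor_rpow_mul_pow_lt {r : ℝ} (hr : 1 < r) {n₀ m : ℕ} (hm : 4 * n₀ + 3 ≤ m) :
    (⌊r ^ ((m : ℝ) / 4)⌋₊.choose m : ℝ) * r ^ n₀ < r ^ m.choose 2 := by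
  have hr₀ : 0 ≤ r := zero_le_one.trans hr.le
  have hchoose : (⌊r ^ ((m : ℝ) / 4)⌋₊.choose m : ℝ) ≤ r ^ ((m : ℝ) / 4 * m) :=
    calc (⌊r ^ ((m : ℝ) / 4)⌋₊.choose m : ℝ) ≤ (⌊r ^ ((m : ℝ) / 4)⌋₊ : ℝ) ^ m := by
          exact_mod_cast Nat.choose_le_pow _ _
      _ ≤ (r ^ ((m : ℝ) / 4)) ^ m := by gcongr; exact Nat.floor_le (by positivity)
      _ = r ^ ((m : ℝ) / 4 * m) := by rw [← Real.rpow_natCast, ← Real.rpow_mul hr₀]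
  -- the slack is `m.choose 2 - m ^ 2 / 4 = m (m - 2) / 4`
  have hexp : (m : ℝ) / 4 * m + n₀ < (m.choose 2 : ℕ) := by
    have hm' : (4 * n₀ + 3 : ℝ) ≤ m := by exact_mod_cast hm
    rw [Nat.cast_choose_two]
    nlinarith
  calc (⌊r ^ ((m : ℝ) / 4)⌋₊.choose m : ℝ) * r ^ n₀ ≤ r ^ ((m : ℝ) / 4 * m) * r ^ (n₀ : ℝ) := by
        rw [Real.rpow_natCast]; gcongr
    _ = r ^ ((m : ℝ) / 4 * m + n₀) := (Real.rpow_add (zero_lt_one.trans hr) _ _).symm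
    _ < r ^ ((m.choose 2 : ℕ) : ℝ) := Real.rpow_lt_rpow_of_exponent_lt hr hexp
    _ = r ^ m.choose 2 := Real.rpow_natCast _ _

/-- For all integers q ≥ t ≥ 2 there is m₀ such that for every m ≥ m₀ there is a
q-coloring of the pairs of U = {0,…,⌊(q/(t-1))^{m/4}⌋-1} with every m-subset inducing ≥ t colors. -/
theorem stmt_0 (q t : ℕ) (ht : 2 ≤ t) (hq : t ≤ q) :
    ∃ m₀ : ℕ, ∀ m : ℕ, m₀ ≤ m →
      ∃ φ : Finset ℕ → Fin q,
        ∀ A ⊆ Finset.range ⌊((q : ℝ) / ((t : ℝ) - 1)) ^ ((m : ℝ) / 4)⌋₊,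
          A.card = m → t ≤ ((Finset.powersetCard 2 A).image φ).card := by
  obtain ⟨u, rfl⟩ : ∃ u, t = u + 1 := ⟨t - 1, by omega⟩
  simp only [Nat.cast_add_one, add_sub_cancel_right]
  have hu₀ : (0 : ℝ) < u := by exact_mod_cast (by omega : 0 < u)
  have hr : 1 < (q : ℝ) / u := by
    rw [one_lt_div hu₀]
    exact_mod_cast (by omega : u < q)
  obtain ⟨n₀, hn₀⟩ := pow_unbounded_of_one_lt (q.choose u : ℝ) hr
  refine ⟨4 * n₀ + 3, fun m hm => ?_⟩
  set N := ⌊((q : ℝ) / u) ^ ((m : ℝ) / 4)⌋₊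
  have hbound : (N.choose m * q.choose u * u ^ m.choose 2 : ℝ) < q ^ m.choose 2 :=
    calc (N.choose m * q.choose u * u ^ m.choose 2 : ℝ)
        ≤ N.choose m * ((q : ℝ) / u) ^ n₀ * u ^ m.choose 2 := by gcongr
      _ < ((q : ℝ) / u) ^ m.choose 2 * u ^ m.choose 2 := by
        gcongr
        exact choose_floor_rpow_mul_pow_lt hr hm
      _ = q ^ m.choose 2 := by rw [← mul_pow, div_mul_cancel₀ _ hu₀.ne']
  obtain ⟨φ, hφ⟩ := exists_coloring_pairs_of_choose_mul_lt (N := N) (m := m) (q := q) (u := u)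
    (by omega) (by omega) (by exact_mod_cast hbound)
  exact ⟨φ, hφ⟩
end

section
/- For every integer r > 3, there exists a 3-coloring of the 3-element subsets of V₃ = {0, 1, …, ⌊2^{r²/24}⌋ - 1} such that every subset of V₃ of size r contains triples of at least three distinct colors. -/
/-!
Colour the triples uniformly at random with three colours. An `r`-set `A` misses a fixed colour
with probability `(2/3)^t`, where `t = C(r,3)`, so by the union bound over the `C(N,r)` sets `A`
and the three colours some colouring is good as soon as `3 · C(N,r) · 2^t < 3^t`. For
`N ≤ 2^s` with `s = ⌈r²/24⌉` this holds because `C(N,r) ≤ 2^(sr) ≈ 2^(r³/24)` while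
`(3/2)^t ≥ 2^(t/2) ≈ 2^(r³/12)`; the cases `r ≤ 8` are checked numerically.
-/

open Finset

section UnionBound

variable {ι κ : Type*} [Fintype ι] [DecidableEq ι] [Fintype κ] [DecidableEq κ]

theorem card_filter_forall_ne_mul_pow (S : Finset ι) (c : κ) :
    #{f : ι → κ | ∀ i ∈ S, f i ≠ c} * Fintype.card κ ^ #S =
      (Fintype.card κ - 1) ^ #S * Fintype.card κ ^ Fintype.card ι := by
  have hpi : ({f : ι → κ | ∀ i ∈ S, f i ≠ c} : Finset (ι → κ)) =
      Fintype.piFinset fun i => if i ∈ S then {c}ᶜ else univ := by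
    ext f
    simp only [mem_filter, mem_univ, true_and, Fintype.mem_piFinset]
    refine forall_congr' fun i => ?_
    split_ifs <;> simp [*]
  rw [hpi, Fintype.card_piFinset]
  simp only [apply_ite card, card_compl, card_singleton, card_univ]
  rw [prod_ite, prod_const, prod_const, filter_mem_eq_inter, univ_inter, filter_not,
    filter_mem_eq_inter, univ_inter, card_sdiff_of_subset (subset_univ S), card_univ, mul_assoc,
    pow_sub_mul_pow _ (card_le_univ S)]

theorem exists_forall_image_eq_univ_of_card_mul_lt [Nonempty κ] {F : Finset (Finset ι)} {t : ℕ}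
    (hF : ∀ S ∈ F, #S = t)
    (h : #F * Fintype.card κ * (Fintype.card κ - 1) ^ t < Fintype.card κ ^ t) :
    ∃ f : ι → κ, ∀ S ∈ F, S.image f = univ := by
  set q := Fintype.card κ
  by_contra! hbad
  have hcover : (univ : Finset (ι → κ)) ⊆
      F.biUnion fun S => univ.biUnion fun c => {f : ι → κ | ∀ i ∈ S, f i ≠ c} := by
    intro f _
    obtain ⟨S, hS, hSf⟩ := hbad f
    obtain ⟨c, hc⟩ := not_forall.1 fun h' => hSf (eq_univ_of_forall h')
    simp only [mem_biUnion, mem_univ, true_and, mem_filter]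
    exact ⟨S, hS, c, fun i hi hfi => hc (mem_image.2 ⟨i, hi, hfi⟩)⟩
  have hq : 0 < q := Fintype.card_pos
  have := calc q ^ Fintype.card ι * q ^ t
      = #(univ : Finset (ι → κ)) * q ^ t := by rw [card_univ, Fintype.card_fun]
    _ ≤ (∑ S ∈ F, ∑ c, #{f : ι → κ | ∀ i ∈ S, f i ≠ c}) * q ^ t := by
        gcongr
        exact (card_le_card hcover).trans
          (card_biUnion_le.trans (sum_le_sum fun _ _ => card_biUnion_le))
    _ = ∑ S ∈ F, ∑ c : κ, #{f : ι → κ | ∀ i ∈ S, f i ≠ c} * q ^ #S := by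
        rw [sum_mul]
        refine sum_congr rfl fun S hS => ?_
        rw [sum_mul, hF S hS]
    _ = #F * q * (q - 1) ^ t * q ^ Fintype.card ι := by
        rw [sum_congr rfl fun S _ => sum_congr rfl fun c _ => card_filter_forall_ne_mul_pow S c]
        rw [sum_congr rfl fun S hS => by rw [hF S hS]]
        simp only [sum_const, card_univ, smul_eq_mul]
        ring
    _ < q ^ t * q ^ Fintype.card ι := by gcongr
  rw [mul_comm] at this
  exact lt_irrefl _ this

end UnionBound

theorem exists_coloring_powersetCard_image_eq_univ {α κ : Type*} [DecidableEq α] [Fintype κ]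
    [DecidableEq κ] [Nonempty κ] (V : Finset α) (r k : ℕ)
    (h : (#V).choose r * Fintype.card κ * (Fintype.card κ - 1) ^ r.choose k <
      Fintype.card κ ^ r.choose k) :
    ∃ χ : Finset α → κ, ∀ A ⊆ V, #A = r → (A.powersetCard k).image χ = univ := by
  obtain ⟨f, hf⟩ := exists_forall_image_eq_univ_of_card_mul_lt
    (F := (univ.powersetCard r).image fun B : Finset V => B.powersetCard k) (t := r.choose k)
    (by simp only [mem_image, mem_powersetCard_univ]
        rintro _ ⟨B, hB, rfl⟩
        rw [card_powersetCard, hB])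
    (by refine lt_of_le_of_lt ?_ h
        gcongr
        exact card_image_le.trans (by rw [card_powersetCard, card_univ, Fintype.card_coe]))
  refine ⟨fun s => f (s.subtype (· ∈ V)), fun A hAV hA => eq_univ_of_forall fun c => ?_⟩
  set B := A.subtype (· ∈ V)
  have hB : #B = r := by rw [card_subtype, filter_true_of_mem hAV, hA]
  have hfB := hf _ (mem_image_of_mem _ (mem_powersetCard_univ.2 hB))
  obtain ⟨s, hs, rfl⟩ := mem_image.1 (hfB ▸ mem_univ c)
  refine mem_image.2 ⟨s.map (Function.Embedding.subtype _), ?_, ?_⟩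
  · rw [mem_powersetCard] at hs ⊢
    refine ⟨fun a ha => ?_, by rw [card_map, hs.2]⟩
    obtain ⟨b, hb, rfl⟩ := mem_map.1 ha
    exact mem_subtype.1 (hs.1 hb)
  · congr 1
    ext b
    simp

theorem floor_two_rpow_sq_div_le (r : ℕ) :
    ⌊(2 : ℝ) ^ ((r : ℝ) ^ 2 / 24)⌋₊ ≤ 2 ^ ((r ^ 2 + 23) / 24) := by
  have hexp : (r : ℝ) ^ 2 / 24 ≤ ((r ^ 2 + 23) / 24 : ℕ) := by
    rw [div_le_iff₀ (by norm_num)]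
    exact_mod_cast (by omega : r ^ 2 ≤ (r ^ 2 + 23) / 24 * 24)
  refine Nat.floor_le_of_le ?_
  calc (2 : ℝ) ^ ((r : ℝ) ^ 2 / 24) ≤ 2 ^ (((r ^ 2 + 23) / 24 : ℕ) : ℝ) :=
        Real.rpow_le_rpow_of_exponent_le one_le_two hexp
    _ = _ := by norm_cast

theorem six_mul_choose_three (n : ℕ) : 6 * (n + 2).choose 3 = (n + 2) * (n + 1) * n := by
  rw [← show Nat.factorial 3 = 6 from rfl, ← Nat.descFactorial_eq_factorial_mul_choose]
  simp only [Nat.descFactorial, Nat.add_sub_cancel, Nat.add_succ_sub_one, Nat.sub_zero]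
  ring

theorem three_mul_choose_mul_two_pow_lt {r : ℕ} (hr : 4 ≤ r) :
    3 * (2 ^ ((r ^ 2 + 23) / 24)).choose r * 2 ^ r.choose 3 < 3 ^ r.choose 3 := by
  rcases le_or_gt r 8 with h8 | h8
  · interval_cases r <;> norm_num [Nat.choose]
  set s := (r ^ 2 + 23) / 24
  set t := r.choose 3
  have hs : 24 * s ≤ r ^ 2 + 23 := Nat.mul_div_le _ _
  have ht : 2 * (s * r) + 4 ≤ t := by
    obtain ⟨m, rfl⟩ : ∃ m, r = m + 9 := ⟨r - 9, by omega⟩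
    have h6 := six_mul_choose_three (m + 7)
    have := Nat.mul_le_mul_right (m + 9) hs
    nlinarith
  have hchoose : (2 ^ s).choose r ^ 2 ≤ 2 ^ (2 * (s * r)) :=
    calc (2 ^ s).choose r ^ 2 ≤ ((2 ^ s) ^ r) ^ 2 := by gcongr; exact Nat.choose_le_pow _ _
      _ = 2 ^ (2 * (s * r)) := by ring
  refine lt_of_pow_lt_pow_left₀ 2 (by positivity) ?_
  calc (3 * (2 ^ s).choose r * 2 ^ t) ^ 2 = 9 * (2 ^ s).choose r ^ 2 * 2 ^ (2 * t) := by ring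
    _ ≤ 9 * 2 ^ (2 * (s * r)) * 2 ^ (2 * t) := by gcongr
    _ < 2 ^ 4 * 2 ^ (2 * (s * r)) * 2 ^ (2 * t) := by gcongr; norm_num
    _ ≤ 2 ^ t * 2 ^ (2 * t) := by rw [← pow_add, add_comm]; gcongr; norm_num
    _ = 8 ^ t := by rw [← pow_add, show t + 2 * t = 3 * t by ring, pow_mul]; norm_num
    _ ≤ 9 ^ t := by gcongr; norm_num
    _ = (3 ^ t) ^ 2 := by rw [← pow_mul, mul_comm, pow_mul]; norm_num

/-- a 3-coloring of triples of {0,…,⌊2^{r²/24}⌋-1} with every r-subset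
inducing at least three colors. -/
theorem stmt_2 (r : ℕ) (hr : 3 < r) :
    ∃ χ : Finset ℕ → Fin 3,
      ∀ A ⊆ Finset.range ⌊(2 : ℝ) ^ ((r : ℝ) ^ 2 / 24)⌋₊,
        A.card = r → 3 ≤ ((Finset.powersetCard 3 A).image χ).card := by
  set N := ⌊(2 : ℝ) ^ ((r : ℝ) ^ 2 / 24)⌋₊
  have hN : (#(range N)).choose r * 3 * (3 - 1) ^ r.choose 3 < 3 ^ r.choose 3 := by
    rw [card_range]
    calc N.choose r * 3 * (3 - 1) ^ r.choose 3
        ≤ 3 * (2 ^ ((r ^ 2 + 23) / 24)).choose r * 2 ^ r.choose 3 := by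
          rw [mul_comm (N.choose r)]
          gcongr
          exact floor_two_rpow_sq_div_le r
      _ < 3 ^ r.choose 3 := three_mul_choose_mul_two_pow_lt hr
  obtain ⟨χ, hχ⟩ := exists_coloring_powersetCard_image_eq_univ (κ := Fin 3) (range N) r 3 hN
  refine ⟨χ, fun A hA hAr => ?_⟩
  rw [hχ A hA hAr, card_univ, Fintype.card_fin]
end

section
/- For every integer s > 3, there exists a 3-coloring of the 2-element subsets of V₂ = {0, 1, …, ⌊2^{s/4}⌋} such that every subset of V₂ of size s contains pairs of at least three distinct colors. -/
/-!
Counting argument (Erdős). For a fixed `s`-set `A` and a colour `b`, exactly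
`2 ^ C(s,2) * 3 ^ (M - C(s,2))` of the `3 ^ M` colourings of the `M` pairs avoid `b` on the pairs
of `A`. A union bound over the `C(N,s)` sets and the three colours leaves a good colouring as soon
as `3 * C(N,s) * 2 ^ C(s,2) < 3 ^ C(s,2)`. For `s < 16` this holds because
`N = ⌊2 ^ (s/4)⌋ + 1 < s`; for `s ≥ 16` one has `N ^ 4 ≤ 2 ^ (s+1)`, so
`C(N,s) ≤ N ^ s ≤ 2 ^ (s(s+1)/4)`, which is beaten by `(3/2) ^ C(s,2)` because `3 ^ 12 > 2 ^ 19`.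
-/

open Finset Fintype

section Coloring

variable {ι β : Type*} [Fintype ι] [DecidableEq ι] [Fintype β] [DecidableEq β]

lemma card_filter_forall_ne (E : Finset ι) (b : β) :
    #{c : ι → β | ∀ e ∈ E, c e ≠ b} = (card β - 1) ^ #E * card β ^ (card ι - #E) := by
  have : ({c : ι → β | ∀ e ∈ E, c e ≠ b} : Finset (ι → β)) =
      piFinset fun e => if e ∈ E then {b}ᶜ else univ := by
    ext c
    simp only [mem_filter, mem_univ, true_and, mem_piFinset]
    refine forall_congr' fun e => ?_
    split_ifs with he <;> simp [he]
  simp only [this, card_piFinset, apply_ite card, card_compl, card_singleton, card_univ]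
  rw [prod_ite, prod_const, prod_const, filter_mem_eq_inter, univ_inter, filter_not,
    filter_mem_eq_inter, univ_inter, card_univ_sdiff]

lemma exists_forall_image_eq_univ_of_fintype [Nonempty β] (𝓔 : Finset (Finset ι)) (K : ℕ)
    (h𝓔 : ∀ E ∈ 𝓔, #E = K) (hK : #𝓔 * card β * (card β - 1) ^ K < card β ^ K) :
    ∃ c : ι → β, ∀ E ∈ 𝓔, E.image c = univ := by
  by_contra! hbad
  set r := card β
  have hcover : (univ : Finset (ι → β)) ⊆
      𝓔.biUnion fun E => univ.biUnion fun b => {c : ι → β | ∀ e ∈ E, c e ≠ b} := by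
    intro c _
    obtain ⟨E, hE, hc⟩ := hbad c
    obtain ⟨b, hb⟩ := not_forall.1 (mt eq_univ_iff_forall.2 hc)
    simp only [mem_biUnion, mem_univ, mem_filter, true_and]
    exact ⟨E, hE, b, fun e he hcb => hb (mem_image.2 ⟨e, he, hcb⟩)⟩
  have hcount : r ^ card ι ≤ #𝓔 * r * (r - 1) ^ K * r ^ (card ι - K) := by
    calc r ^ card ι = #(univ : Finset (ι → β)) := by simp [r]
      _ ≤ _ := card_le_card hcover
      _ ≤ ∑ E ∈ 𝓔, ∑ b : β, #{c : ι → β | ∀ e ∈ E, c e ≠ b} :=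
        card_biUnion_le.trans (sum_le_sum fun _ _ => card_biUnion_le)
      _ = ∑ E ∈ 𝓔, ∑ b : β, (r - 1) ^ K * r ^ (card ι - K) :=
        Finset.sum_congr rfl fun E hE => by simp only [card_filter_forall_ne, h𝓔 E hE, r]
      _ = #𝓔 * r * (r - 1) ^ K * r ^ (card ι - K) := by simp [r, mul_assoc]
  obtain ⟨E, hE, -⟩ := hbad fun _ => Classical.arbitrary β
  have hKι : K ≤ card ι := h𝓔 E hE ▸ card_le_univ E
  have hsplit : r ^ card ι = r ^ K * r ^ (card ι - K) := by rw [← pow_add, Nat.add_sub_cancel' hKι]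
  rw [hsplit] at hcount
  exact (Nat.le_of_mul_le_mul_right hcount (pow_pos card_pos _)).not_gt hK

lemma exists_forall_image_eq_univ {α : Type*} [Nonempty β]
    (𝓔 : Finset (Finset α)) (K : ℕ) (h𝓔 : ∀ E ∈ 𝓔, #E = K)
    (hK : #𝓔 * card β * (card β - 1) ^ K < card β ^ K) :
    ∃ c : α → β, ∀ E ∈ 𝓔, E.image c = univ := by
  classical
  set U := 𝓔.sup id
  have hsub : ∀ E ∈ 𝓔, E ⊆ U := fun E hE => le_sup (f := id) hE
  obtain ⟨c, hc⟩ := exists_forall_image_eq_univ_of_fintype (𝓔.image (Finset.subtype (· ∈ U))) K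
    (forall_mem_image.2 fun E hE => by
      rw [card_subtype, filter_true_of_mem (hsub E hE), h𝓔 E hE])
    (lt_of_le_of_lt (by gcongr; exact card_image_le) hK)
  refine ⟨fun a => if h : a ∈ U then c ⟨a, h⟩ else Classical.arbitrary β, fun E hE => ?_⟩
  rw [eq_univ_iff_forall]
  intro b
  obtain ⟨e, he, rfl⟩ := mem_image.1 ((hc _ (mem_image_of_mem _ hE)).symm ▸ mem_univ b)
  exact mem_image.2 ⟨e, mem_subtype.1 he, dif_pos e.2⟩

end Coloring

lemma two_rpow_div_four_pow_four (s : ℕ) : ((2 : ℝ) ^ ((s : ℝ) / 4)) ^ 4 = 2 ^ s := by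
  rw [← Real.rpow_mul_natCast (by norm_num), Nat.cast_ofNat, div_mul_cancel₀ _ four_ne_zero,
    Real.rpow_natCast]

lemma floor_two_rpow_div_four_pow_four_le (s : ℕ) : ⌊(2 : ℝ) ^ ((s : ℝ) / 4)⌋₊ ^ 4 ≤ 2 ^ s := by
  have h : (⌊(2 : ℝ) ^ ((s : ℝ) / 4)⌋₊ : ℝ) ^ 4 ≤ ((2 : ℝ) ^ ((s : ℝ) / 4)) ^ 4 :=
    pow_le_pow_left₀ (Nat.cast_nonneg _) (Nat.floor_le (by positivity)) 4
  rw [two_rpow_div_four_pow_four] at h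
  exact_mod_cast h

lemma two_pow_lt_floor_two_rpow_div_four_add_one_pow_four (s : ℕ) :
    2 ^ s < (⌊(2 : ℝ) ^ ((s : ℝ) / 4)⌋₊ + 1) ^ 4 := by
  have h := pow_lt_pow_left₀ (Nat.lt_floor_add_one ((2 : ℝ) ^ ((s : ℝ) / 4))) (by positivity)
    four_ne_zero
  rw [two_rpow_div_four_pow_four] at h
  exact_mod_cast h

lemma floor_two_rpow_div_four_add_one_lt {s : ℕ} (h3 : 3 ≤ s) (h16 : s < 16) :
    ⌊(2 : ℝ) ^ ((s : ℝ) / 4)⌋₊ + 1 < s := by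
  have hs : 2 ^ s < (s - 1) ^ 4 := by interval_cases s <;> norm_num
  have := lt_of_pow_lt_pow_left₀ 4 (Nat.zero_le _)
    ((floor_two_rpow_div_four_pow_four_le s).trans_lt hs)
  omega

lemma floor_two_rpow_div_four_add_one_pow_four_le {s : ℕ} (h16 : 16 ≤ s) :
    (⌊(2 : ℝ) ^ ((s : ℝ) / 4)⌋₊ + 1) ^ 4 ≤ 2 ^ (s + 1) := by
  set f := ⌊(2 : ℝ) ^ ((s : ℝ) / 4)⌋₊
  have hf : 16 < f + 1 := by
    refine lt_of_pow_lt_pow_left₀ 4 (Nat.zero_le _) ?_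
    calc 16 ^ 4 = 2 ^ 16 := by norm_num
      _ ≤ 2 ^ s := Nat.pow_le_pow_right two_pos h16
      _ < (f + 1) ^ 4 := two_pow_lt_floor_two_rpow_div_four_add_one_pow_four s
  have : 16 ^ 4 * (f + 1) ^ 4 ≤ 16 ^ 4 * 2 ^ (s + 1) :=
    calc 16 ^ 4 * (f + 1) ^ 4 = (16 * (f + 1)) ^ 4 := by ring
      _ ≤ (17 * f) ^ 4 := Nat.pow_le_pow_left (by omega) 4
      _ ≤ 16 ^ 4 * (2 * f ^ 4) := by ring_nf; omega
      _ ≤ 16 ^ 4 * 2 ^ (s + 1) := by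
        rw [pow_succ' 2 s]
        exact Nat.mul_le_mul_left _ (Nat.mul_le_mul_left 2 (floor_two_rpow_div_four_pow_four_le s))
  exact Nat.le_of_mul_le_mul_left this (by norm_num)

lemma three_mul_pow_mul_two_pow_lt {N s : ℕ} (h16 : 16 ≤ s) (hN : N ^ 4 ≤ 2 ^ (s + 1)) :
    3 * N ^ s * 2 ^ s.choose 2 < 3 ^ s.choose 2 := by
  have hK : s.choose 2 * 2 = s * (s - 1) := by
    rw [Nat.choose_two_right, Nat.div_mul_cancel (Nat.even_mul_pred_self s).two_dvd]
  set K := s.choose 2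
  have hexp : 20 + (s + 1) * (3 * s) + 12 * K < 19 * K := by
    obtain ⟨t, rfl⟩ : ∃ t, s = t + 16 := ⟨s - 16, by omega⟩
    rw [show t + 16 - 1 = t + 15 by omega] at hK
    nlinarith
  refine lt_of_pow_lt_pow_left₀ 12 (Nat.zero_le _) ?_
  calc (3 * N ^ s * 2 ^ K) ^ 12 = 3 ^ 12 * (N ^ 4) ^ (3 * s) * 2 ^ (12 * K) := by ring
    _ ≤ 2 ^ 20 * (2 ^ (s + 1)) ^ (3 * s) * 2 ^ (12 * K) :=
      Nat.mul_le_mul (Nat.mul_le_mul (by norm_num) (Nat.pow_le_pow_left hN _)) le_rfl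
    _ = 2 ^ (20 + (s + 1) * (3 * s) + 12 * K) := by ring
    _ < 2 ^ (19 * K) := Nat.pow_lt_pow_right one_lt_two hexp
    _ = (2 ^ 19) ^ K := pow_mul 2 19 K
    _ ≤ (3 ^ 12) ^ K := Nat.pow_le_pow_left (by norm_num) K
    _ = (3 ^ K) ^ 12 := by rw [← pow_mul, ← pow_mul, mul_comm]

lemma three_mul_choose_mul_two_pow_lt_s3 {s : ℕ} (hs : 3 < s) :
    3 * (⌊(2 : ℝ) ^ ((s : ℝ) / 4)⌋₊ + 1).choose s * 2 ^ s.choose 2 < 3 ^ s.choose 2 := by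
  rcases lt_or_ge s 16 with h16 | h16
  · rw [Nat.choose_eq_zero_of_lt (floor_two_rpow_div_four_add_one_lt hs.le h16), mul_zero,
      zero_mul]
    positivity
  · calc _ ≤ 3 * (⌊(2 : ℝ) ^ ((s : ℝ) / 4)⌋₊ + 1) ^ s * 2 ^ s.choose 2 := by
          gcongr; exact Nat.choose_le_pow _ _
      _ < 3 ^ s.choose 2 :=
          three_mul_pow_mul_two_pow_lt h16 (floor_two_rpow_div_four_add_one_pow_four_le h16)

/-- a 3-coloring of pairs of {0,…,⌊2^{s/4}⌋} with every s-subset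
inducing at least three colors. -/
theorem stmt_3 (s : ℕ) (hs : 3 < s) :
    ∃ φ : Finset ℕ → Fin 3,
      ∀ A ⊆ Finset.range (⌊(2 : ℝ) ^ ((s : ℝ) / 4)⌋₊ + 1),
        A.card = s → 3 ≤ ((Finset.powersetCard 2 A).image φ).card := by
  set N := ⌊(2 : ℝ) ^ ((s : ℝ) / 4)⌋₊ + 1
  set 𝓔 := (powersetCard s (range N)).image (powersetCard 2)
  have h𝓔 : ∀ E ∈ 𝓔, #E = s.choose 2 := forall_mem_image.2 fun A hA => by
    rw [card_powersetCard, (mem_powersetCard.1 hA).2]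
  have hcount : #𝓔 * 3 * 2 ^ s.choose 2 < 3 ^ s.choose 2 :=
    calc #𝓔 * 3 * 2 ^ s.choose 2 ≤ 3 * N.choose s * 2 ^ s.choose 2 := by
          rw [mul_comm #𝓔]
          gcongr
          exact card_image_le.trans_eq (by rw [card_powersetCard, card_range])
      _ < 3 ^ s.choose 2 := three_mul_choose_mul_two_pow_lt_s3 hs
  obtain ⟨φ, hφ⟩ := exists_forall_image_eq_univ (β := Fin 3) 𝓔 _ h𝓔 (by simpa using hcount)
  refine ⟨φ, fun A hA hAs => ?_⟩
  rw [hφ _ (mem_image_of_mem _ (mem_powersetCard.2 ⟨hA, hAs⟩)), card_univ, Fintype.card_fin]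
end

section
/- Let M ≥ 1, U = {0,…,M-1}, V = {0,…,2^M - 1}, and let φ be any q-coloring of the pairs of U. Define a q-coloring χ of triples of V by χ(v₁,v₂,v₃) = φ(δ(v₁,v₂), δ(v₂,v₃)) for v₁ < v₂ < v₃, where δ(u,v) is the most significant bit where u,v differ. Then for every m ≥ 2 and every set of n = 2^m vertices v₁ < ⋯ < v_n in V, there is a subset B of {δ(v_i, v_{i+1}) : 1 ≤ i ≤ n-1} with at least m distinct elements such that for every pair {δ_r, δ_s} from B, some triple v_i < v_j < v_k among the chosen vertices satisfies χ(v_i,v_j,v_k) = φ(δ_r, δ_s). -/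
/-!
Write `D i j = δ (v i) (v j)`. Because `δ` is the highest differing bit, for `i < j < k` the
two values `D i j`, `D j k` differ and `D i k` is their maximum. Hence `D a b` is the maximum of
the consecutive values `D p (p + 1)`, `a ≤ p < b`, attained at a unique `p`. The vertices
`a, …, p` and `p + 1, …, b` split the block `a, …, b` in two; recurse into the larger half,
which still has `2 ^ t` vertices, and add `D a b` to the set found there. For a consecutive value
`D j (j + 1)` of the half, the triple `(p, j, j + 1)` (right half) or `(j, j + 1, p + 1)` (left
half) realizes the pair `{D a b, D j (j + 1)}`.
-/

def IsHighestDifferingBit (δ : ℕ → ℕ → ℕ) : Prop :=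
  ∀ u v : ℕ, u ≠ v →
    (Nat.testBit u (δ u v) ≠ Nat.testBit v (δ u v) ∧
      ∀ i, Nat.testBit u i ≠ Nat.testBit v i → i ≤ δ u v)

namespace IsHighestDifferingBit

variable {δ : ℕ → ℕ → ℕ} (hδ : IsHighestDifferingBit δ) {u x w : ℕ}
include hδ

theorem testBit_eq_of_lt {j : ℕ} (hj : δ u w < j) : Nat.testBit u j = Nat.testBit w j := by
  by_cases huw : u = w
  · rw [huw]
  · by_contra h
    exact absurd ((hδ u w huw).2 j h) (by omega)

theorem eq_of_testBit_ne {i : ℕ} (hi : Nat.testBit u i ≠ Nat.testBit w i)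
    (habove : ∀ j, i < j → Nat.testBit u j = Nat.testBit w j) : δ u w = i := by
  have huw : u ≠ w := by rintro rfl; exact hi rfl
  have hle : i ≤ δ u w := (hδ u w huw).2 i hi
  by_contra hne
  exact (hδ u w huw).1 (habove _ (lt_of_le_of_ne hle (Ne.symm hne)))

theorem testBit_of_lt (h : u < w) :
    Nat.testBit u (δ u w) = false ∧ Nat.testBit w (δ u w) = true := by
  have hne := (hδ u w h.ne).1
  cases hu : Nat.testBit u (δ u w) <;> cases hw : Nat.testBit w (δ u w) <;> rw [hu, hw] at hne
  · exact absurd rfl hne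
  · exact ⟨rfl, rfl⟩
  · exact absurd (Nat.lt_of_testBit _ hw hu fun j hj => (hδ.testBit_eq_of_lt hj).symm)
      h.not_gt
  · exact absurd rfl hne

theorem ne_and_eq_max (h₁ : u < x) (h₂ : x < w) :
    δ u x ≠ δ x w ∧ δ u w = max (δ u x) (δ x w) := by
  have hne : δ u x ≠ δ x w := by
    intro h
    have hx₁ := (hδ.testBit_of_lt h₁).2
    rw [h, (hδ.testBit_of_lt h₂).1] at hx₁
    exact Bool.false_ne_true hx₁
  refine ⟨hne, hδ.eq_of_testBit_ne ?_ fun j hj => ?_⟩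
  · rcases lt_or_gt_of_ne hne with hlt | hlt
    · rw [max_eq_right hlt.le, hδ.testBit_eq_of_lt hlt]
      exact (hδ x w h₂.ne).1
    · rw [max_eq_left hlt.le, ← hδ.testBit_eq_of_lt (w := w) hlt]
      exact (hδ u x h₁.ne).1
  · rw [hδ.testBit_eq_of_lt (lt_of_le_of_lt (le_max_left _ _) hj),
      hδ.testBit_eq_of_lt (lt_of_le_of_lt (le_max_right _ _) hj)]

end IsHighestDifferingBit

def MaxSplits {β : Type*} [LinearOrder β] (D : ℕ → ℕ → β) (n : ℕ) : Prop :=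
  ∀ i j k, i < j → j < k → k < n → D i j ≠ D j k ∧ D i k = max (D i j) (D j k)

theorem IsHighestDifferingBit.maxSplits {δ : ℕ → ℕ → ℕ} (hδ : IsHighestDifferingBit δ)
    {v : ℕ → ℕ} {n : ℕ} (hmono : ∀ i j, i < j → j < n → v i < v j) :
    MaxSplits (fun i j => δ (v i) (v j)) n := fun i j k hij hjk hkn =>
  hδ.ne_and_eq_max (hmono i j hij (hjk.trans hkn)) (hmono j k hjk hkn)

def RealizesPair {β : Type*} [DecidableEq β] (D : ℕ → ℕ → β) (n : ℕ) (x y : β) :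
    Prop :=
  ∃ i j k, i < j ∧ j < k ∧ k < n ∧ ({D i j, D j k} : Finset β) = {x, y}

instance {β : Type*} [DecidableEq β] (D : ℕ → ℕ → β) (n : ℕ) :
    Std.Symm (RealizesPair D n) :=
  ⟨fun _ _ ⟨i, j, k, hij, hjk, hkn, h⟩ =>
    ⟨i, j, k, hij, hjk, hkn, h.trans (Finset.pair_comm _ _)⟩⟩

namespace MaxSplits

variable {β : Type*} [LinearOrder β] {D : ℕ → ℕ → β} {n : ℕ} (hD : MaxSplits D n)
  {a b : ℕ}
include hD

theorem mono {c d : ℕ} (hac : a ≤ c) (hcd : c < d) (hdb : d ≤ b) (hbn : b < n) :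
    D c d ≤ D a b := by
  have hright : D c d ≤ D c b := by
    rcases hdb.lt_or_eq with hdb | rfl
    · exact (hD c d b hcd hdb hbn).2 ▸ le_max_left _ _
    · exact le_rfl
  rcases hac.lt_or_eq with hac | rfl
  · exact hright.trans ((hD a c b hac (hcd.trans_le hdb) hbn).2 ▸ le_max_right _ _)
  · exact hright

theorem exists_step_eq (hab : a < b) (hbn : b < n) :
    ∃ p, a ≤ p ∧ p < b ∧ D p (p + 1) = D a b := by
  induction b, hab using Nat.le_induction with
  | base => exact ⟨a, le_rfl, Nat.lt_succ_self a, rfl⟩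
  | succ b hab ih =>
    obtain ⟨p, hap, hpb, hp⟩ := ih (by omega)
    have hsplit := (hD a b (b + 1) hab b.lt_succ_self hbn).2
    rcases le_total (D a b) (D b (b + 1)) with hle | hle
    · exact ⟨b, by omega, by omega, by rw [hsplit, max_eq_right hle]⟩
    · exact ⟨p, hap, by omega, by rw [hsplit, max_eq_left hle, hp]⟩

theorem eq_of_step_eq {p c d : ℕ} (hac : a ≤ c) (hcp : c ≤ p) (hpd : p < d) (hdb : d ≤ b)
    (hbn : b < n) (hp : D p (p + 1) = D a b) : D c d = D a b :=
  le_antisymm (hD.mono hac (hcp.trans_lt hpd) hdb hbn)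
    (hp ▸ hD.mono hcp p.lt_succ_self hpd (hdb.trans_lt hbn))

theorem step_eq_unique {i j : ℕ} (hai : a ≤ i) (hib : i < b) (haj : a ≤ j) (hjb : j < b)
    (hbn : b < n) (hi : D i (i + 1) = D a b) (hj : D j (j + 1) = D a b) : i = j := by
  wlog hij : i < j generalizing i j
  · rcases (not_lt.1 hij).lt_or_eq with hji | hji
    · exact (this haj hjb hai hib hj hi hji).symm
    · exact hji.symm
  have hmid : D (i + 1) (j + 1) = D a b := hD.eq_of_step_eq (by omega) hij j.lt_succ_self hjb hbn hj
  exact ((hD i (i + 1) (j + 1) i.lt_succ_self (by omega) (by omega)).1 (hi.trans hmid.symm)).elim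

theorem realizesPair_step [DecidableEq β] {p j : ℕ} (hap : a ≤ p) (hpb : p < b) (hbn : b < n)
    (hp : D p (p + 1) = D a b) (haj : a ≤ j) (hjb : j < b) (hjp : j ≠ p) :
    RealizesPair D n (D a b) (D j (j + 1)) := by
  rcases lt_or_gt_of_ne hjp with hjp | hpj
  · have hmid : D (j + 1) (p + 1) = D a b :=
      hD.eq_of_step_eq (by omega) hjp p.lt_succ_self hpb hbn hp
    exact ⟨j, j + 1, p + 1, j.lt_succ_self, by omega, by omega, by rw [hmid, Finset.pair_comm]⟩
  · have hmid : D p j = D a b := hD.eq_of_step_eq hap le_rfl hpj hjb.le hbn hp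
    exact ⟨p, j, j + 1, hpj, j.lt_succ_self, by omega, by rw [hmid]⟩

theorem exists_pairwise_realizesPair [DecidableEq β] (t : ℕ) :
    ∀ a b, b < n → 2 ^ t ≤ b + 1 - a →
      ∃ B ⊆ (Finset.Ico a b).image (fun j => D j (j + 1)),
        t ≤ B.card ∧ (B : Set β).Pairwise (RealizesPair D n) := by
  induction t with
  | zero => exact fun a b _ _ => ⟨∅, Finset.empty_subset _, le_rfl, by simp⟩
  | succ t ih =>
    intro a b hbn hsize
    have hpow : 2 ^ (t + 1) = 2 ^ t + 2 ^ t := by ring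
    have hab : a < b := by have := Nat.one_le_two_pow (n := t); omega
    obtain ⟨p, hap, hpb, hp⟩ := hD.exists_step_eq hab hbn
    obtain ⟨c, d, hac, hdb, hpcd, hcd⟩ :
        ∃ c d, a ≤ c ∧ d ≤ b ∧ p ∉ Finset.Ico c d ∧ 2 ^ t ≤ d + 1 - c := by
      rcases le_or_gt (2 ^ t) (b - p) with h | h
      · exact ⟨p + 1, b, by omega, le_rfl, by simp, by omega⟩
      · exact ⟨a, p, le_rfl, hpb.le, by simp, by omega⟩
    obtain ⟨B, hBsub, hBcard, hBpair⟩ := ih c d (by omega) hcd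
    have hsub : (Finset.Ico c d).image (fun j => D j (j + 1)) ⊆
        (Finset.Ico a b).image (fun j => D j (j + 1)) :=
      Finset.image_subset_image (Finset.Ico_subset_Ico hac hdb)
    have hsteps : ∀ y ∈ B, ∃ j, a ≤ j ∧ j < b ∧ j ≠ p ∧ D j (j + 1) = y := by
      intro y hy
      obtain ⟨j, hj, rfl⟩ := Finset.mem_image.1 (hBsub hy)
      rw [Finset.mem_Ico] at hj
      exact ⟨j, by omega, by omega, by rintro rfl; exact hpcd (Finset.mem_Ico.2 hj), rfl⟩
    have hnotin : D a b ∉ B := by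
      intro hmem
      obtain ⟨j, haj, hjb, hjp, hj⟩ := hsteps _ hmem
      exact hjp (hD.step_eq_unique haj hjb hap hpb hbn hj hp)
    refine ⟨insert (D a b) B, Finset.insert_subset ?_ (hBsub.trans hsub), ?_, ?_⟩
    · exact Finset.mem_image.2 ⟨p, Finset.mem_Ico.2 ⟨hap, hpb⟩, hp⟩
    · rw [Finset.card_insert_of_notMem hnotin]; omega
    · rw [Finset.coe_insert, Set.pairwise_insert_of_symm]
      refine ⟨hBpair, fun y hy _ => ?_⟩
      obtain ⟨j, haj, hjb, hjp, rfl⟩ := hsteps y hy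
      exact hD.realizesPair_step hap hpb hbn hp haj hjb hjp

end MaxSplits

theorem stmt_8_general (q : ℕ) (δ : ℕ → ℕ → ℕ)
    (hδ : ∀ u v : ℕ, u ≠ v →
      (Nat.testBit u (δ u v) ≠ Nat.testBit v (δ u v) ∧
        ∀ i, Nat.testBit u i ≠ Nat.testBit v i → i ≤ δ u v))
    (φ : Finset ℕ → Fin q) (m : ℕ) (n : ℕ) (hn : n = 2 ^ m)
    (v : ℕ → ℕ) (hmono : ∀ i j, i < j → j < n → v i < v j) :
    ∃ B : Finset ℕ,
      B ⊆ (Finset.range (n - 1)).image (fun i => δ (v i) (v (i + 1))) ∧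
      m ≤ B.card ∧
      ∀ δr ∈ B, ∀ δs ∈ B, δr ≠ δs →
        ∃ i j k, i < j ∧ j < k ∧ k < n ∧
          φ {δ (v i) (v j), δ (v j) (v k)} = φ {δr, δs} := by
  have hn1 : 1 ≤ n := hn ▸ Nat.one_le_two_pow
  obtain ⟨B, hBsub, hBcard, hBpair⟩ :=
    (IsHighestDifferingBit.maxSplits hδ hmono).exists_pairwise_realizesPair m 0 (n - 1)
      (by omega) (by omega)
  refine ⟨B, by rwa [Finset.range_eq_Ico], hBcard, fun x hx y hy hxy => ?_⟩
  obtain ⟨i, j, k, hij, hjk, hkn, h⟩ := hBpair hx hy hxy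
  exact ⟨i, j, k, hij, hjk, hkn, congrArg φ h⟩

/-- the stepping-up lemma: for the coloring χ(v₁,v₂,v₃) = φ{δ(v₁,v₂),δ(v₂,v₃)}
of triples of {0,…,2^M-1}, any 2^m increasing vertices admit m distinct consecutive δ-values B
such that every pair of colors φ(δ_r,δ_s), for {δ_r,δ_s} ⊆ B, is realized by some triple. -/
theorem stmt_8 (M q : ℕ) (hM : 1 ≤ M) (δ : ℕ → ℕ → ℕ)
    (hδ : ∀ u v : ℕ, u ≠ v →
      (Nat.testBit u (δ u v) ≠ Nat.testBit v (δ u v) ∧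
        ∀ i, Nat.testBit u i ≠ Nat.testBit v i → i ≤ δ u v))
    (φ : Finset ℕ → Fin q) (m : ℕ) (hm : 2 ≤ m) (n : ℕ) (hn : n = 2 ^ m)
    (v : ℕ → ℕ) (hmono : ∀ i j, i < j → j < n → v i < v j)
    (hbound : ∀ i, i < n → v i < 2 ^ M) :
    ∃ B : Finset ℕ,
      B ⊆ (Finset.range (n - 1)).image (fun i => δ (v i) (v (i + 1))) ∧
      m ≤ B.card ∧
      ∀ δr ∈ B, ∀ δs ∈ B, δr ≠ δs →
        ∃ i j k, i < j ∧ j < k ∧ k < n ∧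
          φ {δ (v i) (v j), δ (v j) (v k)} = φ {δr, δs} :=
  stmt_8_general q δ hδ φ m n hn v hmono
end

section
/- For all integers n > q ≥ 9, f(n;q,3) ≥ f(⌊n/log₂ n⌋; q-6, 3)^{⌊n^{1/4}/2⌋} (a recursive lower bound: a q-coloring with the 3-color property on a ground set of that size exists). -/
/-- `hasColoring N n q t` : there is a q-coloring of the triples of an N-element set in which
every n-element subset induces at least t distinct colors. -/
def hasColoring (N n q t : ℕ) : Prop :=
  ∃ χ : Finset ℕ → Fin q, ∀ A ⊆ Finset.range N, A.card = n →
    t ≤ ((Finset.powersetCard 3 A).image χ).card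

/-- `f n q t` is the maximum N admitting such a coloring. -/
noncomputable def f (n q t : ℕ) : ℕ := sSup {N | hasColoring N n q t}


/-!
Stepping up. Read the numbers below `M ^ k` as words of length `k` over the alphabet
`range M`, where `M = f(m; q-6, 3)` carries a colouring `φ` of triples with at least three
colours on every `m`-set, and let `ψ` be a 3-colouring of the pairs of the `k` positions with no
monochromatic set of `2 log k + 2` positions (Erdős's counting bound). A triple `a < b < c`
whose two consecutive pairs split at the same position gets the `φ`-colour of its three digits
there; otherwise it gets the `ψ`-colour of the two split positions, tagged by whether they go up
or down: `(q - 6) + 3 + 3` colours in all.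

If an `n`-set `S` saw at most two colours, one of three things would happen. Without descending
colours, the elements of `S` above its minimum `z` are determined by the position where they
split from `z` and their digit there; at most `m - 2` digits occur per position (at most one
without `φ`-colours), and the positions reached form a `ψ`-monochromatic set (an arbitrary
subset of `range k` without `φ`-colours). Without ascending colours the same holds with the
maximum. With both, no `φ`-colour occurs, so `S` is the set of leaves of a binary tree whose paths
turn left and right at most `2 log k + 1` times each, and `|S| ≤ 2 ^ (4 log k + 2)`. For
`m = ⌊n / log n⌋` and `k = ⌊n^(1/4) / 2⌋` all these bounds are below `n`. That `f` is a maximum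
at all is Ramsey's theorem for triples.
-/

open Finset

theorem Finset.exists_lt_lt_eq_of_card_eq_three {α : Type*} [LinearOrder α] {s : Finset α}
    (h : s.card = 3) : ∃ a b c, a < b ∧ b < c ∧ s = {a, b, c} := by
  refine ⟨s.orderEmbOfFin h 0, s.orderEmbOfFin h 1, s.orderEmbOfFin h 2,
    (s.orderEmbOfFin h).strictMono (by decide), (s.orderEmbOfFin h).strictMono (by decide), ?_⟩
  ext x
  rw [← mem_coe, ← s.range_orderEmbOfFin h, Set.mem_range]
  simp only [Fin.exists_fin_succ, IsEmpty.exists_iff, or_false, mem_insert, mem_singleton]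
  simp [eq_comm, Fin.succ]

theorem Finset.exists_lt_eq_of_card_eq_two {α : Type*} [LinearOrder α] {s : Finset α}
    (h : s.card = 2) : ∃ a b, a < b ∧ s = {a, b} := by
  obtain ⟨a, b, hab, rfl⟩ := card_eq_two.1 h
  rcases lt_or_gt_of_ne hab with h | h
  exacts [⟨a, b, h, rfl⟩, ⟨b, a, h, pair_comm _ _⟩]

theorem Finset.card_add_one_le_of_maps_to {α β : Type*} [DecidableEq β] {f : α → β}
    (hf : Function.Injective f) {E : Finset α} {C : Finset β} (hE : ∀ e ∈ E, f e ∈ C) {x : β}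
    (hx : x ∈ C) (hxf : ∀ e, f e ≠ x) : E.card + 1 ≤ C.card := by
  have hsub : insert x (E.image f) ⊆ C := insert_subset hx fun y hy => by
    obtain ⟨e, he, rfl⟩ := mem_image.1 hy
    exact hE e he
  have := card_le_card hsub
  rwa [card_insert_of_notMem (fun h => by
    obtain ⟨e, -, he⟩ := mem_image.1 h
    exact hxf e he), card_image_of_injective _ hf] at this

theorem Finset.card_filter_min'_lt_add_one {α : Type*} [LinearOrder α] {s : Finset α}
    (hs : s.Nonempty) : {b ∈ s | s.min' hs < b}.card + 1 = s.card := by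
  rw [← card_erase_add_one (s.min'_mem hs)]
  congr 2
  ext b
  simp only [mem_filter, mem_erase]
  exact ⟨fun h => ⟨h.2.ne', h.1⟩, fun h => ⟨h.2, lt_of_le_of_ne (s.min'_le b h.2) (Ne.symm h.1)⟩⟩

theorem Finset.card_filter_lt_max'_add_one {α : Type*} [LinearOrder α] {s : Finset α}
    (hs : s.Nonempty) : {b ∈ s | b < s.max' hs}.card + 1 = s.card := by
  rw [← card_erase_add_one (s.max'_mem hs)]
  congr 2
  ext b
  simp only [mem_filter, mem_erase]
  exact ⟨fun h => ⟨h.2.ne, h.1⟩, fun h => ⟨h.2, lt_of_le_of_ne (s.le_max' b h.2) h.1⟩⟩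

theorem Nat.two_pow_add_eq {p r : ℕ} (hp : p ≠ 0) (hr : r ≠ 0) :
    2 ^ (p + r) = 2 ^ (p - 1 + r) + 2 ^ (p + (r - 1)) := by
  obtain ⟨p, rfl⟩ := exists_eq_add_one_of_ne_zero hp
  obtain ⟨r, rfl⟩ := exists_eq_add_one_of_ne_zero hr
  rw [Nat.add_sub_cancel, Nat.add_sub_cancel]
  ring

/-- The Erdős–Rado arrow relation `R → (s)^r_q`. -/
def Arrows (R s r q : ℕ) : Prop :=
  ∀ (χ : Finset ℕ → Fin q) (S : Finset ℕ), R ≤ S.card →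
    ∃ T ⊆ S, T.card = s ∧ ∃ c, ∀ B ∈ powersetCard r T, χ B = c

theorem exists_arrows_zero (q s : ℕ) : ∃ R, Arrows R s 0 q := by
  refine ⟨s, fun χ S hS => ?_⟩
  obtain ⟨T, hTS, hT⟩ := exists_subset_card_eq hS
  exact ⟨T, hTS, hT, χ ∅, by simp⟩

theorem exists_minHomogeneous {r q : ℕ} (hr : ∀ s, ∃ R, Arrows R s r q) (i : ℕ) :
    ∃ G, ∀ (χ : Finset ℕ → Fin q) (S : Finset ℕ), G ≤ S.card →
      ∃ T ⊆ S, T.card = i ∧ ∃ c : ℕ → Fin q, ∀ a ∈ T, ∀ B ⊆ T, B.card = r →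
        (∀ b ∈ B, a < b) → χ (insert a B) = c a := by
  induction i with
  | zero => exact ⟨0, fun χ S _ => ⟨∅, empty_subset _, rfl, fun _ => χ ∅, by simp⟩⟩
  | succ i ih =>
    obtain ⟨G, hG⟩ := ih
    obtain ⟨R, hR⟩ := hr G
    refine ⟨R + 1, fun χ S hS => ?_⟩
    have hne : S.Nonempty := card_pos.1 (by omega)
    set a := S.min' hne
    have haS : a ∈ S := S.min'_mem hne
    obtain ⟨U, hUS, hU, c₀, hc₀⟩ := hR (fun B => χ (insert a B)) (S.erase a)
      (by rw [card_erase_of_mem haS]; omega)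
    obtain ⟨T, hTU, hT, c, hc⟩ := hG χ U (hU.ge)
    have hTS : T ⊆ S.erase a := hTU.trans hUS
    have haT : a ∉ T := fun h => (mem_erase.1 (hTS h)).1 rfl
    have ha_lt : ∀ x ∈ T, a < x := fun x hx =>
      lt_of_le_of_ne (S.min'_le x (mem_of_mem_erase (hTS hx))) (mem_erase.1 (hTS hx)).1.symm
    refine ⟨insert a T, insert_subset haS (hTS.trans (erase_subset _ _)),
      by rw [card_insert_of_notMem haT, hT], Function.update c a c₀, ?_⟩
    intro x hx B hBT hB hxB
    have hBT' : B ⊆ T := fun b hb => by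
      rcases mem_insert.1 (hBT hb) with rfl | hb'
      · rcases mem_insert.1 hx with rfl | hx'
        · exact absurd (hxB _ hb) (lt_irrefl _)
        · exact absurd (hxB _ hb) (ha_lt x hx').asymm
      · exact hb'
    rcases mem_insert.1 hx with rfl | hx'
    · rw [Function.update_self]
      exact hc₀ B (mem_powersetCard.2 ⟨hBT'.trans hTU, hB⟩)
    · rw [Function.update_of_ne (ha_lt x hx').ne']
      exact hc x hx' B hBT' hB hxB

theorem exists_arrows_succ {r q : ℕ} (hr : ∀ s, ∃ R, Arrows R s r q) (s : ℕ) :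
    ∃ R, Arrows R s (r + 1) q := by
  obtain ⟨G, hG⟩ := exists_minHomogeneous hr (q * s)
  refine ⟨G, fun χ S hS => ?_⟩
  obtain ⟨T, hTS, hT, c, hc⟩ := hG χ S hS
  obtain ⟨c₁, -, hc₁⟩ := exists_le_card_fiber_of_mul_le_card_of_maps_to (s := T) (n := s)
    (fun x _ => mem_univ (c x)) ⟨χ ∅, mem_univ _⟩ (by simp [hT])
  obtain ⟨T', hT'F, hT'⟩ := exists_subset_card_eq hc₁
  refine ⟨T', hT'F.trans ((filter_subset _ _).trans hTS), hT', c₁, fun B hB => ?_⟩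
  obtain ⟨hBT', hB⟩ := mem_powersetCard.1 hB
  have hne : B.Nonempty := card_pos.1 (by omega)
  have hmin : B.min' hne ∈ T' := hBT' (B.min'_mem hne)
  rw [← insert_erase (B.min'_mem hne),
    hc _ (mem_of_mem_filter _ (hT'F hmin)) _ (fun b hb => mem_of_mem_filter _ (hT'F
      (hBT' (mem_of_mem_erase hb)))) (by rw [card_erase_of_mem (B.min'_mem hne), hB]; rfl)
      (fun b hb => lt_of_le_of_ne (B.min'_le b (mem_of_mem_erase hb)) (ne_of_mem_erase hb).symm)]
  exact (mem_filter.1 (hT'F hmin)).2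

theorem exists_arrows (r q s : ℕ) : ∃ R, Arrows R s r q := by
  induction r generalizing s with
  | zero => exact exists_arrows_zero q s
  | succ r ih => exact exists_arrows_succ ih s

theorem not_hasColoring_of_arrows {R N n q t : ℕ} (hR : Arrows R n 3 q) (hN : R ≤ N)
    (ht : 2 ≤ t) : ¬ hasColoring N n q t := by
  rintro ⟨χ, hχ⟩
  obtain ⟨T, hT, hTn, c, hc⟩ := hR χ (range N) (by simpa using hN)
  have : ((powersetCard 3 T).image χ).card ≤ 1 :=
    card_le_one.2 fun x hx y hy => by
      obtain ⟨B, hB, rfl⟩ := mem_image.1 hx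
      obtain ⟨B', hB', rfl⟩ := mem_image.1 hy
      rw [hc B hB, hc B' hB']
  have := hχ T hT hTn
  omega

theorem bddAbove_hasColoring (n q : ℕ) {t : ℕ} (ht : 2 ≤ t) :
    BddAbove {N | hasColoring N n q t} := by
  obtain ⟨R, hR⟩ := exists_arrows 3 q n
  exact ⟨R, fun N hN => not_lt.1 fun h => not_hasColoring_of_arrows hR h.le ht hN⟩

theorem le_f {N n q t : ℕ} (ht : 2 ≤ t) (h : hasColoring N n q t) : N ≤ f n q t :=
  le_csSup (bddAbove_hasColoring n q ht) h

theorem hasColoring_f {n q t : ℕ} (hn : 0 < n) (hq : 0 < q) (ht : 2 ≤ t) :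
    hasColoring (f n q t) n q t := by
  have h0 : hasColoring 0 n q t := ⟨fun _ => ⟨0, hq⟩, fun A hA hAn => by
    rw [range_zero, subset_empty] at hA
    subst hA
    simp at hAn
    omega⟩
  exact Nat.sSup_mem ⟨0, h0⟩ (bddAbove_hasColoring n q ht)

theorem hasColoring_of_embedding {α : Type*} [DecidableEq α] {N n q t : ℕ} (e : α ↪ Fin q)
    (χ : Finset ℕ → α)
    (h : ∀ A ⊆ range N, A.card = n → t ≤ ((powersetCard 3 A).image χ).card) :
    hasColoring N n q t :=
  ⟨e ∘ χ, fun A hA hAn => by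
    rw [← image_image, card_image_of_injective _ e.injective]
    exact h A hA hAn⟩

section PairColoring

variable {α β : Type*} [Fintype α] [DecidableEq α] [Fintype β] [DecidableEq β]

theorem card_filter_forall_eq_mul_pow (P : Finset α) (c : β) :
    #{g : α → β | ∀ x ∈ P, g x = c} * Fintype.card β ^ #P =
      Fintype.card β ^ Fintype.card α := by
  have hfilter : ({g : α → β | ∀ x ∈ P, g x = c} : Finset (α → β)) =
      Fintype.piFinset fun x => if x ∈ P then {c} else univ := by
    ext g
    simp only [mem_filter, mem_univ, true_and, Fintype.mem_piFinset]
    refine ⟨fun h x => ?_, fun h x hx => by simpa [hx] using h x⟩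
    split_ifs with hx
    · exact mem_singleton.2 (h x hx)
    · exact mem_univ _
  simp only [hfilter, Fintype.card_piFinset, apply_ite card, card_singleton, card_univ]
  rw [prod_ite, prod_const, prod_const, one_pow, one_mul, ← pow_add]
  congr 1
  convert card_compl_add_card P using 3
  ext
  simp

/-- Erdős's counting bound: a random colouring of the pairs has no large monochromatic set. -/
theorem exists_pairColoring_of_choose_mul_lt [Nonempty β] {s : ℕ}
    (h : (Fintype.card α).choose s * Fintype.card β < Fintype.card β ^ s.choose 2) :
    ∃ g : Finset α → β, ∀ T : Finset α, T.card = s → ∀ c, ∃ B ∈ powersetCard 2 T, g B ≠ c := by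
  by_contra! hbad
  set bad : Finset α → β → Finset (Finset α → β) :=
    fun T c => {g | ∀ B ∈ powersetCard 2 T, g B = c}
  have hcover : (univ : Finset (Finset α → β)) ⊆
      (powersetCard s univ).biUnion fun T => univ.biUnion (bad T) := by
    intro g _
    obtain ⟨T, hT, c, hc⟩ := hbad g
    simp only [mem_biUnion, mem_powersetCard, mem_univ, true_and, subset_univ]
    exact ⟨T, hT, c, mem_filter.2 ⟨mem_univ _, hc⟩⟩
  have hbadT : ∀ T ∈ powersetCard s (univ : Finset α), ∀ c,
      #(bad T c) * Fintype.card β ^ s.choose 2 = Fintype.card (Finset α → β) := by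
    intro T hT c
    rw [Fintype.card_fun, ← card_filter_forall_eq_mul_pow _ c, card_powersetCard,
      (mem_powersetCard.1 hT).2]
  have := calc
    Fintype.card (Finset α → β) * Fintype.card β ^ s.choose 2
      ≤ (∑ T ∈ powersetCard s univ, ∑ c, #(bad T c)) * Fintype.card β ^ s.choose 2 := by
        gcongr
        exact (card_le_card hcover).trans (card_biUnion_le.trans
          (sum_le_sum fun T _ => card_biUnion_le))
    _ = (Fintype.card α).choose s * Fintype.card β * Fintype.card (Finset α → β) := by
        rw [sum_mul, sum_congr rfl fun T hT => by
          rw [sum_mul, sum_congr rfl fun c _ => hbadT T hT c]]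
        simp [card_univ, mul_comm, mul_left_comm, mul_assoc]
    _ < Fintype.card β ^ s.choose 2 * Fintype.card (Finset α → β) :=
        Nat.mul_lt_mul_of_pos_right h Fintype.card_pos
  linarith

end PairColoring

theorem choose_mul_three_lt (k : ℕ) :
    k.choose (2 * Nat.log 2 k + 2) * 3 < 3 ^ (2 * Nat.log 2 k + 2).choose 2 := by
  set c := Nat.log 2 k + 1
  have hk : k < 2 ^ c := Nat.lt_pow_succ_log_self (by norm_num) k
  have hs : 2 * Nat.log 2 k + 2 = 2 * c := by omega
  rw [hs]
  rcases lt_or_ge c 3 with hc | hc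
  · rw [Nat.choose_eq_zero_of_lt (by interval_cases c <;> omega)]
    positivity
  have hchoose : (2 * c).choose 2 + c = 2 * (c * c) := by
    rw [Nat.choose_two_right, mul_assoc, Nat.mul_div_cancel_left _ (by norm_num), ← mul_add_one,
      Nat.sub_add_cancel (by omega)]
    ring
  have h3 : 3 * 3 ^ c ≤ 2 ^ (c * c) := calc
    3 * 3 ^ c = 3 ^ (c + 1) := by ring
    _ ≤ 4 ^ (c + 1) := Nat.pow_le_pow_left (by norm_num) _
    _ = 2 ^ (2 * c + 2) := by rw [show 4 = 2 ^ 2 by rfl, ← pow_mul]; ring_nf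
    _ ≤ 2 ^ (c * c) := Nat.pow_le_pow_right (by norm_num) (by nlinarith)
  have hpow : k ^ (2 * c) < 2 ^ (2 * (c * c)) := by
    rw [show 2 * (c * c) = c * (2 * c) by ring, pow_mul 2 c]
    exact Nat.pow_lt_pow_left hk (by omega)
  refine Nat.lt_of_mul_lt_mul_right (a := 3 ^ c) ?_
  calc k.choose (2 * c) * 3 * 3 ^ c
      ≤ k ^ (2 * c) * (3 * 3 ^ c) := by
        rw [mul_assoc]; exact Nat.mul_le_mul_right _ (Nat.choose_le_pow _ _)
    _ < 2 ^ (2 * (c * c)) * 2 ^ (c * c) :=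
        Nat.mul_lt_mul_of_lt_of_le hpow h3 (by positivity)
    _ = 8 ^ (c * c) := by rw [← pow_add, show 8 = 2 ^ 3 by rfl, ← pow_mul]; ring_nf
    _ ≤ 9 ^ (c * c) := Nat.pow_le_pow_left (by norm_num) _
    _ = 3 ^ (2 * c).choose 2 * 3 ^ c := by
        rw [← pow_add, hchoose, pow_mul 3 2]; norm_num

theorem exists_pairColoring (k : ℕ) : ∃ ψ : Finset ℕ → Fin 3, ∀ J ⊆ range k,
    ((powersetCard 2 J).image ψ).card ≤ 1 → J.card ≤ 2 * Nat.log 2 k + 1 := by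
  obtain ⟨g, hg⟩ := exists_pairColoring_of_choose_mul_lt (α := Fin k) (β := Fin 3)
    (by simpa using choose_mul_three_lt k)
  refine ⟨fun B => g {i | (i : ℕ) ∈ B}, fun J hJ hmono => ?_⟩
  by_contra! hJs
  obtain ⟨T, hTJ, hT⟩ := exists_subset_card_eq (show 2 * Nat.log 2 k + 2 ≤ J.card by omega)
  set T' : Finset (Fin k) := {i | (i : ℕ) ∈ T}
  have hmap : ∀ B' : Finset (Fin k),
      ({i | (i : ℕ) ∈ B'.map Fin.valEmbedding} : Finset (Fin k)) = B' := by
    intro B'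
    ext i
    simp [Fin.val_inj]
  have hT'map : T'.map Fin.valEmbedding = T := by
    ext x
    simp only [mem_map, mem_filter, mem_univ, true_and, Fin.valEmbedding_apply, T']
    exact ⟨fun ⟨i, hi, hix⟩ => hix ▸ hi,
      fun hx => ⟨⟨x, mem_range.1 (hJ (hTJ hx))⟩, hx, rfl⟩⟩
  have hT' : T'.card = 2 * Nat.log 2 k + 2 := by rw [← card_map Fin.valEmbedding, hT'map, hT]
  have hpair : ∀ B' ∈ powersetCard 2 T', g B' ∈ (powersetCard 2 J).image
      fun B => g {i | (i : ℕ) ∈ B} := by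
    intro B' hB'
    obtain ⟨hB'T, hB'2⟩ := mem_powersetCard.1 hB'
    refine mem_image.2 ⟨B'.map Fin.valEmbedding, mem_powersetCard.2 ⟨?_, by simpa⟩,
      congrArg g (hmap B')⟩
    rw [← hT'map] at hTJ
    exact (map_subset_map.2 hB'T).trans hTJ
  obtain ⟨B₀, hB₀⟩ : (powersetCard 2 T').Nonempty := powersetCard_nonempty.2 (by omega)
  obtain ⟨B, hB, hne⟩ := hg T' hT' (g B₀)
  exact hne (card_le_one.1 hmono _ (hpair B hB) _ (hpair B₀ hB₀))

namespace SteppingUp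

/-- The highest base-`M` digit position below `k` at which `a` and `b` differ (`0` if `a = b`). -/
def splitLevel (M k a b : ℕ) : ℕ := Nat.findGreatest (fun t => a / M ^ t ≠ b / M ^ t) k

def digit (M t a : ℕ) : ℕ := a / M ^ t % M

section Digits

variable {M k a b c s t : ℕ}

theorem div_pow_splitLevel_ne (hab : a ≠ b) :
    a / M ^ splitLevel M k a b ≠ b / M ^ splitLevel M k a b :=
  Nat.findGreatest_spec (P := fun t => a / M ^ t ≠ b / M ^ t) (Nat.zero_le k) (by simpa using hab)

theorem div_pow_eq_of_le (h : a / M ^ s = b / M ^ s) (hst : s ≤ t) : a / M ^ t = b / M ^ t := by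
  rw [← Nat.add_sub_cancel' hst, pow_add, ← Nat.div_div_eq_div_mul, ← Nat.div_div_eq_div_mul, h]

theorem splitLevel_lt_of_div_pow_eq (hab : a ≠ b) (h : a / M ^ t = b / M ^ t) :
    splitLevel M k a b < t :=
  not_le.1 fun hle => div_pow_splitLevel_ne hab (div_pow_eq_of_le h hle)

theorem div_pow_eq_of_splitLevel_lt (hM : 0 < M) (ha : a < M ^ k) (hb : b < M ^ k)
    (h : splitLevel M k a b < t) : a / M ^ t = b / M ^ t := by
  rcases le_or_gt t k with htk | hkt
  · by_contra hne
    exact absurd (Nat.le_findGreatest htk hne) (not_le.2 h)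
  · have := Nat.pow_le_pow_right hM hkt.le
    rw [Nat.div_eq_of_lt (ha.trans_le this), Nat.div_eq_of_lt (hb.trans_le this)]

theorem splitLevel_lt (ha : a < M ^ k) (hb : b < M ^ k) (hab : a ≠ b) :
    splitLevel M k a b < k :=
  splitLevel_lt_of_div_pow_eq hab (by rw [Nat.div_eq_of_lt ha, Nat.div_eq_of_lt hb])

theorem splitLevel_eq (hM : 0 < M) (ha : a < M ^ k) (hb : b < M ^ k)
    (h₁ : a / M ^ (t + 1) = b / M ^ (t + 1)) (h₂ : a / M ^ t ≠ b / M ^ t) :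
    splitLevel M k a b = t :=
  le_antisymm (Nat.lt_succ_iff.1 (splitLevel_lt_of_div_pow_eq (fun h => h₂ (h ▸ rfl)) h₁))
    (not_lt.1 fun h => h₂ (div_pow_eq_of_splitLevel_lt hM ha hb h))

theorem splitLevel_comm : splitLevel M k a b = splitLevel M k b a := by
  simp only [splitLevel, ne_comm]

theorem lt_iff_div_pow_lt (h : a / M ^ t ≠ b / M ^ t) : a < b ↔ a / M ^ t < b / M ^ t :=
  ⟨fun hab => lt_of_le_of_ne (Nat.div_le_div_right hab.le) h,
    fun h' => not_le.1 fun hba => absurd (Nat.div_le_div_right hba) (not_le.2 h')⟩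

theorem lt_and_splitLevel_eq (hM : 0 < M) (ha : a < M ^ k) (hb : b < M ^ k)
    (h₁ : a / M ^ (t + 1) = b / M ^ (t + 1)) (h₂ : a / M ^ t < b / M ^ t) :
    a < b ∧ splitLevel M k a b = t :=
  ⟨(lt_iff_div_pow_lt h₂.ne).2 h₂, splitLevel_eq hM ha hb h₁ h₂.ne⟩

theorem splitLevel_eq_and_lt_iff_of_splitLevel_lt (hM : 0 < M) (ha : a < M ^ k)
    (hb : b < M ^ k) (hc : c < M ^ k) (hab : a ≠ b)
    (h : splitLevel M k a c < splitLevel M k a b) :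
    splitLevel M k c b = splitLevel M k a b ∧ (a < b ↔ c < b) := by
  set t := splitLevel M k a b
  have hca : ∀ u, t ≤ u → c / M ^ u = a / M ^ u := fun u hu =>
    (div_pow_eq_of_splitLevel_lt hM ha hc (h.trans_le hu)).symm
  have hab' : a / M ^ t ≠ b / M ^ t := div_pow_splitLevel_ne hab
  have hcb : c / M ^ t ≠ b / M ^ t := hca t le_rfl ▸ hab'
  refine ⟨splitLevel_eq hM hc hb ?_ hcb, by rw [lt_iff_div_pow_lt hab', lt_iff_div_pow_lt hcb,
    hca t le_rfl]⟩
  rw [hca _ (Nat.le_succ t)]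
  exact div_pow_eq_of_splitLevel_lt hM ha hb (Nat.lt_succ_self t)

theorem div_pow_eq_mul_add_digit : a / M ^ t = M * (a / M ^ (t + 1)) + digit M t a := by
  rw [digit, pow_succ, ← Nat.div_div_eq_div_mul, Nat.div_add_mod]

theorem digit_lt_digit_iff (h : a / M ^ (t + 1) = b / M ^ (t + 1)) :
    digit M t a < digit M t b ↔ a / M ^ t < b / M ^ t := by
  rw [div_pow_eq_mul_add_digit (a := a), div_pow_eq_mul_add_digit (a := b), h]
  omega

theorem digit_eq_digit_iff (h : a / M ^ (t + 1) = b / M ^ (t + 1)) :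
    digit M t a = digit M t b ↔ a / M ^ t = b / M ^ t := by
  rw [div_pow_eq_mul_add_digit (a := a), div_pow_eq_mul_add_digit (a := b), h]
  omega

end Digits

section Coloring

variable (M k : ℕ) {q : ℕ} (φ : Finset ℕ → Fin q) (ψ : Finset ℕ → Fin 3)

/-- The colour of `a < b < c`: if both pairs split at the same level, the `φ`-colour of the
three digits there (`inl`); otherwise the `ψ`-colour of the two split levels, tagged by whether
they increase (`inr ∘ inl`) or decrease (`inr ∘ inr`) from `(a, b)` to `(b, c)`. -/
def tripleColor (a b c : ℕ) : Fin q ⊕ Fin 3 ⊕ Fin 3 :=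
  if splitLevel M k a b = splitLevel M k b c then
    .inl (φ {digit M (splitLevel M k a b) a, digit M (splitLevel M k a b) b,
      digit M (splitLevel M k a b) c})
  else if splitLevel M k a b < splitLevel M k b c then
    .inr (.inl (ψ {splitLevel M k a b, splitLevel M k b c}))
  else .inr (.inr (ψ {splitLevel M k a b, splitLevel M k b c}))

def stepColoring (T : Finset ℕ) : Fin q ⊕ Fin 3 ⊕ Fin 3 :=
  match T.sort with
  | [a, b, c] => tripleColor M k φ ψ a b c
  | _ => .inr (.inl 0)

def colors (S : Finset ℕ) : Finset (Fin q ⊕ Fin 3 ⊕ Fin 3) :=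
  (powersetCard 3 S).image (stepColoring M k φ ψ)

def upLevels (S : Finset ℕ) (a : ℕ) : Finset ℕ := {b ∈ S | a < b}.image (splitLevel M k a)

def downLevels (S : Finset ℕ) (a : ℕ) : Finset ℕ := {b ∈ S | b < a}.image (splitLevel M k a)

def ballDigits (S : Finset ℕ) (z t : ℕ) : Finset ℕ :=
  {b ∈ S | b / M ^ (t + 1) = z / M ^ (t + 1)}.image (digit M t)

/-- The tree of base-`M` prefixes of `S` has no vertex with three children. -/
def IsBinary (S : Finset ℕ) : Prop :=
  ∀ u, ∀ a ∈ S, ∀ b ∈ S, ∀ c ∈ S, a / M ^ (u + 1) = c / M ^ (u + 1) →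
    a / M ^ u < b / M ^ u → ¬ b / M ^ u < c / M ^ u

variable {M k φ ψ} {S : Finset ℕ} {a b c : ℕ}

theorem upLevels_mono {T : Finset ℕ} (h : T ⊆ S) (a : ℕ) : upLevels M k T a ⊆ upLevels M k S a :=
  image_subset_image (filter_subset_filter _ h)

theorem downLevels_mono {T : Finset ℕ} (h : T ⊆ S) (a : ℕ) :
    downLevels M k T a ⊆ downLevels M k S a :=
  image_subset_image (filter_subset_filter _ h)

theorem upLevels_subset_range (hS : ∀ x ∈ S, x < M ^ k) (ha : a ∈ S) :
    upLevels M k S a ⊆ range k := fun s hs => by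
  obtain ⟨b, hb, rfl⟩ := mem_image.1 hs
  rw [mem_filter] at hb
  exact mem_range.2 (splitLevel_lt (hS a ha) (hS b hb.1) hb.2.ne)

theorem downLevels_subset_range (hS : ∀ x ∈ S, x < M ^ k) (ha : a ∈ S) :
    downLevels M k S a ⊆ range k := fun s hs => by
  obtain ⟨b, hb, rfl⟩ := mem_image.1 hs
  rw [mem_filter] at hb
  exact mem_range.2 (splitLevel_lt (hS a ha) (hS b hb.1) hb.2.ne')

theorem tripleColor_mem_colors (ha : a ∈ S) (hb : b ∈ S) (hc : c ∈ S) (hab : a < b)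
    (hbc : b < c) : tripleColor M k φ ψ a b c ∈ colors M k φ ψ S := by
  have hsort : ({a, b, c} : Finset ℕ).sort = [a, b, c] := by
    rw [sort_insert _ (by simp; omega) (by simp; omega),
      sort_insert _ (by simp; omega) (by simp; omega), sort_singleton]
  refine mem_image.2 ⟨{a, b, c}, mem_powersetCard.2 ⟨?_, ?_⟩, by rw [stepColoring, hsort]⟩
  · simp [insert_subset_iff, ha, hb, hc]
  · exact card_eq_three.2 ⟨a, b, c, hab.ne, (hab.trans hbc).ne, hbc.ne, rfl⟩

theorem up_mem_colors (ha : a ∈ S) (hb : b ∈ S) (hc : c ∈ S) (hab : a < b) (hbc : b < c)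
    (h : splitLevel M k a b < splitLevel M k b c) :
    .inr (.inl (ψ {splitLevel M k a b, splitLevel M k b c})) ∈ colors M k φ ψ S := by
  have := tripleColor_mem_colors (M := M) (k := k) (φ := φ) (ψ := ψ) ha hb hc hab hbc
  rwa [tripleColor, if_neg h.ne, if_pos h] at this

theorem down_mem_colors (ha : a ∈ S) (hb : b ∈ S) (hc : c ∈ S) (hab : a < b) (hbc : b < c)
    (h : splitLevel M k b c < splitLevel M k a b) :
    .inr (.inr (ψ {splitLevel M k a b, splitLevel M k b c})) ∈ colors M k φ ψ S := by
  have := tripleColor_mem_colors (M := M) (k := k) (φ := φ) (ψ := ψ) ha hb hc hab hbc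
  rwa [tripleColor, if_neg h.ne', if_neg h.not_gt] at this

theorem base_mem_colors (hM : 0 < M) (hS : ∀ x ∈ S, x < M ^ k) (ha : a ∈ S) (hb : b ∈ S)
    (hc : c ∈ S) {t : ℕ} (hac : a / M ^ (t + 1) = c / M ^ (t + 1))
    (hab : a / M ^ t < b / M ^ t) (hbc : b / M ^ t < c / M ^ t) :
    .inl (φ {digit M t a, digit M t b, digit M t c}) ∈ colors M k φ ψ S := by
  have h₁ : a / M ^ (t + 1) ≤ b / M ^ (t + 1) :=
    Nat.div_le_div_right ((lt_iff_div_pow_lt hab.ne).2 hab).le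
  have h₂ : b / M ^ (t + 1) ≤ c / M ^ (t + 1) :=
    Nat.div_le_div_right ((lt_iff_div_pow_lt hbc.ne).2 hbc).le
  obtain ⟨hab', hst⟩ := lt_and_splitLevel_eq hM (hS a ha) (hS b hb) (by omega) hab
  obtain ⟨hbc', hst'⟩ := lt_and_splitLevel_eq hM (hS b hb) (hS c hc) (by omega) hbc
  have := tripleColor_mem_colors (M := M) (k := k) (φ := φ) (ψ := ψ) ha hb hc hab' hbc'
  rwa [tripleColor, if_pos (hst.trans hst'.symm), hst] at this

theorem isBinary_of_forall_inl_not_mem (hM : 0 < M) (hS : ∀ x ∈ S, x < M ^ k)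
    (hbase : ∀ e, .inl e ∉ colors M k φ ψ S) : IsBinary M S :=
  fun _ _ ha _ hb _ hc hac hab hbc => hbase _ (base_mem_colors hM hS ha hb hc hac hab hbc)

theorem up_mem_colors_of_mem_upLevels (hM : 0 < M) (hS : ∀ x ∈ S, x < M ^ k) (ha : a ∈ S)
    {s t : ℕ} (hs : s ∈ upLevels M k S a) (ht : t ∈ upLevels M k S a) (hst : s < t) :
    .inr (.inl (ψ {s, t})) ∈ colors M k φ ψ S := by
  obtain ⟨c, hc, rfl⟩ := mem_image.1 hs
  obtain ⟨b, hb, rfl⟩ := mem_image.1 ht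
  rw [mem_filter] at hb hc
  obtain ⟨hcb, hcb'⟩ := splitLevel_eq_and_lt_iff_of_splitLevel_lt hM (hS a ha) (hS b hb.1)
    (hS c hc.1) hb.2.ne hst
  have := up_mem_colors (φ := φ) (ψ := ψ) ha hc.1 hb.1 hc.2 (hcb'.1 hb.2) (hcb ▸ hst)
  rwa [hcb] at this

theorem down_mem_colors_of_mem_downLevels (hM : 0 < M) (hS : ∀ x ∈ S, x < M ^ k) (ha : a ∈ S)
    {s t : ℕ} (hs : s ∈ downLevels M k S a) (ht : t ∈ downLevels M k S a) (hst : s < t) :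
    .inr (.inr (ψ {s, t})) ∈ colors M k φ ψ S := by
  obtain ⟨c, hc, rfl⟩ := mem_image.1 hs
  obtain ⟨b, hb, rfl⟩ := mem_image.1 ht
  rw [mem_filter] at hb hc
  obtain ⟨hcb, hcb'⟩ := splitLevel_eq_and_lt_iff_of_splitLevel_lt hM (hS a ha) (hS b hb.1)
    (hS c hc.1) hb.2.ne' hst
  have hbc : b < c := by
    have : c ≠ b := fun h => (h ▸ hst).ne rfl
    omega
  rw [splitLevel_comm (a := c)] at hcb
  have := down_mem_colors (φ := φ) (ψ := ψ) hb.1 hc.1 ha hbc hc.2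
    (by rw [hcb, splitLevel_comm]; exact hst)
  rwa [hcb, splitLevel_comm (a := c), pair_comm] at this

theorem card_image_splitLevel_lt {T : Finset ℕ} {P : ℕ → Prop} [DecidablePred P] {t : ℕ}
    (hTS : T ⊆ S) (hT : ∀ x ∈ T, x / M ^ t = a / M ^ t) (hPa : ¬ P a) (hb : b ∈ S) (hPb : P b)
    (hab : splitLevel M k a b = t) :
    ({x ∈ T | P x}.image (splitLevel M k a)).card <
      ({x ∈ S | P x}.image (splitLevel M k a)).card := by
  refine card_lt_card ((ssubset_iff_of_subset (image_subset_image (filter_subset_filter _ hTS))).2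
    ⟨t, mem_image.2 ⟨b, mem_filter.2 ⟨hb, hPb⟩, hab⟩, fun ht => ?_⟩)
  obtain ⟨x, hx, hxt⟩ := mem_image.1 ht
  rw [mem_filter] at hx
  exact (splitLevel_lt_of_div_pow_eq (fun h => hPa (by rw [h]; exact hx.2)) (hT x hx.1).symm).ne hxt

theorem IsBinary.div_pow_eq {z t : ℕ} (hbin : IsBinary M S) (hz : z ∈ S) {x y : ℕ} (hx : x ∈ S)
    (hy : y ∈ S) (hzx : z / M ^ (t + 1) = x / M ^ (t + 1))
    (hzy : z / M ^ (t + 1) = y / M ^ (t + 1)) (hx' : z / M ^ t < x / M ^ t)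
    (hy' : z / M ^ t < y / M ^ t) : x / M ^ t = y / M ^ t := by
  by_contra hxy
  rcases lt_or_gt_of_ne hxy with h | h
  exacts [hbin t z hz x hx y hy hzy hx' h, hbin t z hz y hy x hx hzx hy' h]

/-- Leaves of a binary tree whose root-to-leaf paths turn left at most `p` times and right at
most `r` times: the levels in `upLevels S a` are the left turns on the path to `a`. -/
theorem card_le_two_pow (hM : 0 < M) {S₀ : Finset ℕ} (hS₀ : ∀ x ∈ S₀, x < M ^ k)
    (hbin : IsBinary M S₀) (t : ℕ) :
    ∀ S ⊆ S₀, (∀ a ∈ S, ∀ b ∈ S, a / M ^ t = b / M ^ t) → ∀ p r,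
      (∀ a ∈ S, (upLevels M k S a).card ≤ p) → (∀ a ∈ S, (downLevels M k S a).card ≤ r) →
      S.card ≤ 2 ^ (p + r) := by
  induction t with
  | zero =>
    intro S _ hpre p r _ _
    exact (card_le_one.2 fun a ha b hb => by simpa using hpre a ha b hb).trans Nat.one_le_two_pow
  | succ t ih =>
    intro S hS hpre p r hp hr
    rcases S.eq_empty_or_nonempty with rfl | hne
    · simp
    set z := S.min' hne
    have hz : z ∈ S := S.min'_mem hne
    set L := {x ∈ S | x / M ^ t = z / M ^ t}
    set H := {x ∈ S | ¬ x / M ^ t = z / M ^ t}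
    have hLS : L ⊆ S := filter_subset _ _
    have hHS : H ⊆ S := filter_subset _ _
    have hL : ∀ x ∈ L, x / M ^ t = z / M ^ t := fun x hx => (mem_filter.1 hx).2
    have hzH : ∀ x ∈ H, z / M ^ t < x / M ^ t := fun x hx =>
      lt_of_le_of_ne (Nat.div_le_div_right (S.min'_le x (hHS hx))) (Ne.symm (mem_filter.1 hx).2)
    have hH : ∀ x ∈ H, ∀ y ∈ H, x / M ^ t = y / M ^ t := fun x hx y hy =>
      hbin.div_pow_eq (hS hz) (hS (hHS hx)) (hS (hHS hy)) (hpre z hz x (hHS hx))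
        (hpre z hz y (hHS hy)) (hzH x hx) (hzH y hy)
    have hLH : ∀ x ∈ L, ∀ y ∈ H, x < y ∧ splitLevel M k x y = t := fun x hx y hy =>
      lt_and_splitLevel_eq hM (hS₀ x (hS (hLS hx))) (hS₀ y (hS (hHS hy)))
        (hpre x (hLS hx) y (hHS hy)) ((hL x hx).symm ▸ hzH y hy)
    rcases H.eq_empty_or_nonempty with hH0 | ⟨y₀, hy₀⟩
    · refine ih S hS (fun a ha b hb => ?_) p r hp hr
      rw [filter_eq_empty_iff] at hH0
      rw [not_not.1 (hH0 ha), not_not.1 (hH0 hb)]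
    have hzL : z ∈ L := mem_filter.2 ⟨hz, rfl⟩
    have hLup : ∀ a ∈ L, (upLevels M k L a).card < p := fun a ha =>
      (card_image_splitLevel_lt (P := (a < ·)) hLS (fun x hx => (hL x hx).trans (hL a ha).symm)
        (lt_irrefl a) (hHS hy₀) (hLH a ha y₀ hy₀).1 (hLH a ha y₀ hy₀).2).trans_le (hp a (hLS ha))
    have hHdown : ∀ b ∈ H, (downLevels M k H b).card < r := fun b hb =>
      (card_image_splitLevel_lt (P := (· < b)) hHS (fun x hx => hH x hx b hb) (lt_irrefl b) hz
        (hLH z hzL b hb).1 (splitLevel_comm.trans (hLH z hzL b hb).2)).trans_le (hr b (hHS hb))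
    have hL' := ih L (hLS.trans hS) (fun a ha b hb => (hL a ha).trans (hL b hb).symm) (p - 1) r
      (fun a ha => Nat.le_sub_one_of_lt (hLup a ha))
      (fun a ha => (card_le_card (downLevels_mono hLS a)).trans (hr a (hLS ha)))
    have hH' := ih H (hHS.trans hS) hH p (r - 1)
      (fun a ha => (card_le_card (upLevels_mono hHS a)).trans (hp a (hHS ha)))
      (fun a ha => Nat.le_sub_one_of_lt (hHdown a ha))
    rw [← card_filter_add_card_filter_not (s := S) (fun x => x / M ^ t = z / M ^ t),
      Nat.two_pow_add_eq (Nat.ne_zero_of_lt (hLup z hzL)) (Nat.ne_zero_of_lt (hHdown y₀ hy₀))]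
    exact add_le_add hL' hH'

theorem base_mem_colors_of_mem_ballDigits (hM : 0 < M) (hS : ∀ x ∈ S, x < M ^ k) {z t : ℕ}
    {B : Finset ℕ} (hB : B ∈ powersetCard 3 (ballDigits M S z t)) :
    .inl (φ B) ∈ colors M k φ ψ S := by
  obtain ⟨hBD, hB3⟩ := mem_powersetCard.1 hB
  obtain ⟨x, y, w, hxy, hyw, rfl⟩ := exists_lt_lt_eq_of_card_eq_three hB3
  have hmem : ∀ d ∈ ({x, y, w} : Finset ℕ),
      ∃ a ∈ S, a / M ^ (t + 1) = z / M ^ (t + 1) ∧ digit M t a = d := fun d hd => by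
    obtain ⟨a, ha, rfl⟩ := mem_image.1 (hBD hd)
    exact ⟨a, (mem_filter.1 ha).1, (mem_filter.1 ha).2, rfl⟩
  obtain ⟨a, ha, hza, rfl⟩ := hmem x (by simp)
  obtain ⟨b, hb, hzb, rfl⟩ := hmem y (by simp)
  obtain ⟨c, hc, hzc, rfl⟩ := hmem w (by simp)
  exact base_mem_colors hM hS ha hb hc (hza.trans hzc.symm)
    ((digit_lt_digit_iff (hza.trans hzb.symm)).1 hxy)
    ((digit_lt_digit_iff (hzb.trans hzc.symm)).1 hyw)

theorem card_ballDigits_le_two (hM : 0 < M) (hS : ∀ x ∈ S, x < M ^ k)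
    (hbase : ∀ e, .inl e ∉ colors M k φ ψ S) (z t : ℕ) : (ballDigits M S z t).card ≤ 2 := by
  by_contra! h
  obtain ⟨B, hB, hB3⟩ := exists_subset_card_eq (show 3 ≤ _ from h)
  exact hbase _ (base_mem_colors_of_mem_ballDigits (ψ := ψ) hM hS (mem_powersetCard.2 ⟨hB, hB3⟩))

theorem card_ballDigits_lt {m : ℕ} (hM : 0 < M) (hS : ∀ x ∈ S, x < M ^ k)
    (hφ : ∀ A ⊆ range M, A.card = m → 3 ≤ ((powersetCard 3 A).image φ).card)
    (hC : (colors M k φ ψ S).card ≤ 2) (z t : ℕ) : (ballDigits M S z t).card < m := by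
  by_contra! h
  obtain ⟨A, hA, hAm⟩ := exists_subset_card_eq h
  have hAM : A ⊆ range M := fun d hd => by
    obtain ⟨a, -, rfl⟩ := mem_image.1 (hA hd)
    exact mem_range.2 (Nat.mod_lt _ hM)
  have hsub : ((powersetCard 3 A).image φ).image Sum.inl ⊆ colors M k φ ψ S := by
    intro x hx
    obtain ⟨e, he, rfl⟩ := mem_image.1 hx
    obtain ⟨B, hB, rfl⟩ := mem_image.1 he
    exact base_mem_colors_of_mem_ballDigits hM hS (powersetCard_mono hA hB)
  have := card_le_card hsub
  rw [card_image_of_injective _ Sum.inl_injective] at this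
  have := hφ A hAM hAm
  omega

theorem card_filter_splitLevel_eq_lt_card_ballDigits (hM : 0 < M) (hS : ∀ x ∈ S, x < M ^ k)
    {z : ℕ} (hz : z ∈ S)
    {P : ℕ → Prop} [DecidablePred P] (hPz : ¬ P z) {t : ℕ}
    (hinj : Set.InjOn (digit M t) ({x ∈ {b ∈ S | P b} | splitLevel M k z x = t} : Finset ℕ)) :
    {x ∈ {b ∈ S | P b} | splitLevel M k z x = t}.card < (ballDigits M S z t).card := by
  set F := {x ∈ {b ∈ S | P b} | splitLevel M k z x = t}
  have hF : ∀ x ∈ F, x ∈ S ∧ x / M ^ (t + 1) = z / M ^ (t + 1) ∧ digit M t x ≠ digit M t z := by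
    intro x hx
    simp only [F, mem_filter] at hx
    obtain ⟨⟨hxS, hPx⟩, hxt⟩ := hx
    have hzx : z ≠ x := fun h => hPz (h ▸ hPx)
    have h₁ : z / M ^ (t + 1) = x / M ^ (t + 1) :=
      div_pow_eq_of_splitLevel_lt hM (hS z hz) (hS x hxS) (by omega)
    refine ⟨hxS, h₁.symm, fun h => div_pow_splitLevel_ne (M := M) (k := k) hzx ?_⟩
    rw [hxt]
    exact ((digit_eq_digit_iff h₁).1 h.symm)
  have hsub : insert (digit M t z) (F.image (digit M t)) ⊆ ballDigits M S z t := by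
    refine insert_subset (mem_image.2 ⟨z, mem_filter.2 ⟨hz, rfl⟩, rfl⟩) fun d hd => ?_
    obtain ⟨x, hx, rfl⟩ := mem_image.1 hd
    exact mem_image.2 ⟨x, mem_filter.2 ⟨(hF x hx).1, (hF x hx).2.1⟩, rfl⟩
  have := card_le_card hsub
  rwa [card_insert_of_notMem fun h => by
    obtain ⟨x, hx, hxz⟩ := mem_image.1 h
    exact (hF x hx).2.2 hxz, card_image_of_injOn hinj] at this

theorem card_filter_lt_le_mul_card_upLevels (hM : 0 < M) (hS : ∀ x ∈ S, x < M ^ k) {z : ℕ}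
    (hz : z ∈ S) (hdown : ∀ e, .inr (.inr e) ∉ colors M k φ ψ S) (w : ℕ)
    (hw : ∀ t, (ballDigits M S z t).card ≤ w + 1) :
    {b ∈ S | z < b}.card ≤ w * (upLevels M k S z).card := by
  refine card_le_mul_card_image _ w fun t _ => ?_
  set F := {x ∈ {b ∈ S | z < b} | splitLevel M k z x = t}
  have key : ∀ b ∈ F, ∀ c ∈ F, b < c → digit M t b ≠ digit M t c := by
    intro b hb c hc hbc hd
    simp only [F, mem_filter] at hb hc
    have hb₁ := div_pow_eq_of_splitLevel_lt (t := t + 1) hM (hS z hz) (hS b hb.1.1) (by omega)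
    have hc₁ := div_pow_eq_of_splitLevel_lt (t := t + 1) hM (hS z hz) (hS c hc.1.1) (by omega)
    have hbc' : splitLevel M k b c < splitLevel M k z b := by
      rw [hb.2]
      exact splitLevel_lt_of_div_pow_eq hbc.ne ((digit_eq_digit_iff (hb₁.symm.trans hc₁)).1 hd)
    exact hdown _ (down_mem_colors hz hb.1.1 hc.1.1 hb.1.2 hbc hbc')
  have hinj : Set.InjOn (digit M t) F := by
    intro b hb c hc hd
    by_contra hne
    rcases lt_or_gt_of_ne hne with h | h
    exacts [key b hb c hc h hd, key c hc b hb h hd.symm]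
  have : F.card < _ :=
    card_filter_splitLevel_eq_lt_card_ballDigits (P := (z < ·)) hM hS hz (lt_irrefl z) hinj
  have := hw t
  omega

theorem card_filter_gt_le_mul_card_downLevels (hM : 0 < M) (hS : ∀ x ∈ S, x < M ^ k) {z : ℕ}
    (hz : z ∈ S) (hup : ∀ e, .inr (.inl e) ∉ colors M k φ ψ S) (w : ℕ)
    (hw : ∀ t, (ballDigits M S z t).card ≤ w + 1) :
    {b ∈ S | b < z}.card ≤ w * (downLevels M k S z).card := by
  refine card_le_mul_card_image _ w fun t _ => ?_
  set F := {x ∈ {b ∈ S | b < z} | splitLevel M k z x = t}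
  have key : ∀ b ∈ F, ∀ c ∈ F, b < c → digit M t b ≠ digit M t c := by
    intro b hb c hc hbc hd
    simp only [F, mem_filter] at hb hc
    have hb₁ := div_pow_eq_of_splitLevel_lt (t := t + 1) hM (hS z hz) (hS b hb.1.1) (by omega)
    have hc₁ := div_pow_eq_of_splitLevel_lt (t := t + 1) hM (hS z hz) (hS c hc.1.1) (by omega)
    have hbc' : splitLevel M k b c < splitLevel M k c z := by
      rw [splitLevel_comm (a := c), hc.2]
      exact splitLevel_lt_of_div_pow_eq hbc.ne ((digit_eq_digit_iff (hb₁.symm.trans hc₁)).1 hd)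
    exact hup _ (up_mem_colors hb.1.1 hc.1.1 hz hbc hc.1.2 hbc')
  have hinj : Set.InjOn (digit M t) F := by
    intro b hb c hc hd
    by_contra hne
    rcases lt_or_gt_of_ne hne with h | h
    exacts [key b hb c hc h hd, key c hc b hb h hd.symm]
  have : F.card < _ :=
    card_filter_splitLevel_eq_lt_card_ballDigits (P := (· < z)) hM hS hz (lt_irrefl z) hinj
  have := hw t
  omega

variable {d : ℕ}

theorem card_upLevels_le (hM : 0 < M) (hS : ∀ x ∈ S, x < M ^ k)
    (hψ : ∀ J ⊆ range k, ((powersetCard 2 J).image ψ).card ≤ 1 → J.card ≤ d)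
    (hC : (colors M k φ ψ S).card ≤ 2) {x : Fin q ⊕ Fin 3 ⊕ Fin 3} (hx : x ∈ colors M k φ ψ S)
    (hxup : ∀ e, .inr (.inl e) ≠ x) (ha : a ∈ S) : (upLevels M k S a).card ≤ d := by
  refine hψ _ (upLevels_subset_range hS ha) ?_
  have := card_add_one_le_of_maps_to (f := fun e => (.inr (.inl e) : Fin q ⊕ Fin 3 ⊕ Fin 3))
    (fun e e' h => by simpa using h) (E := (powersetCard 2 (upLevels M k S a)).image ψ)
    (fun e he => ?_) hx hxup
  · omega
  obtain ⟨B, hB, rfl⟩ := mem_image.1 he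
  obtain ⟨hBL, hB2⟩ := mem_powersetCard.1 hB
  obtain ⟨s, t, hst, rfl⟩ := exists_lt_eq_of_card_eq_two hB2
  exact up_mem_colors_of_mem_upLevels hM hS ha (hBL (by simp)) (hBL (by simp)) hst

theorem card_downLevels_le (hM : 0 < M) (hS : ∀ x ∈ S, x < M ^ k)
    (hψ : ∀ J ⊆ range k, ((powersetCard 2 J).image ψ).card ≤ 1 → J.card ≤ d)
    (hC : (colors M k φ ψ S).card ≤ 2) {x : Fin q ⊕ Fin 3 ⊕ Fin 3} (hx : x ∈ colors M k φ ψ S)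
    (hxdown : ∀ e, .inr (.inr e) ≠ x) (ha : a ∈ S) : (downLevels M k S a).card ≤ d := by
  refine hψ _ (downLevels_subset_range hS ha) ?_
  have := card_add_one_le_of_maps_to (f := fun e => (.inr (.inr e) : Fin q ⊕ Fin 3 ⊕ Fin 3))
    (fun e e' h => by simpa using h) (E := (powersetCard 2 (downLevels M k S a)).image ψ)
    (fun e he => ?_) hx hxdown
  · omega
  obtain ⟨B, hB, rfl⟩ := mem_image.1 he
  obtain ⟨hBL, hB2⟩ := mem_powersetCard.1 hB
  obtain ⟨s, t, hst, rfl⟩ := exists_lt_eq_of_card_eq_two hB2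
  exact down_mem_colors_of_mem_downLevels hM hS ha (hBL (by simp)) (hBL (by simp)) hst

theorem card_le_of_up_mem_of_down_mem (hM : 0 < M) (hS : ∀ x ∈ S, x < M ^ k)
    (hψ : ∀ J ⊆ range k, ((powersetCard 2 J).image ψ).card ≤ 1 → J.card ≤ d)
    (hC : (colors M k φ ψ S).card ≤ 2) {x y : Fin 3}
    (hup : .inr (.inl x) ∈ colors M k φ ψ S) (hdown : .inr (.inr y) ∈ colors M k φ ψ S) :
    S.card ≤ 2 ^ (2 * d) := by
  have hbase : ∀ e, .inl e ∉ colors M k φ ψ S := fun e he => by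
    have := two_lt_card_iff.2 ⟨_, _, _, he, hup, hdown, by simp, by simp, by simp⟩
    omega
  rw [two_mul]
  exact card_le_two_pow hM hS (isBinary_of_forall_inl_not_mem hM hS hbase) k S subset_rfl
    (fun a ha b hb => by rw [Nat.div_eq_of_lt (hS a ha), Nat.div_eq_of_lt (hS b hb)]) d d
    (fun a ha => card_upLevels_le hM hS hψ hC hdown (by simp) ha)
    (fun a ha => card_downLevels_le hM hS hψ hC hup (by simp) ha)

theorem card_le_of_forall_down_not_mem {m : ℕ} (hM : 0 < M) (hS : ∀ x ∈ S, x < M ^ k)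
    (hφ : ∀ A ⊆ range M, A.card = m → 3 ≤ ((powersetCard 3 A).image φ).card)
    (hψ : ∀ J ⊆ range k, ((powersetCard 2 J).image ψ).card ≤ 1 → J.card ≤ d)
    (hC : (colors M k φ ψ S).card ≤ 2) (hne : S.Nonempty)
    (hdown : ∀ e, .inr (.inr e) ∉ colors M k φ ψ S) :
    S.card ≤ d * (m - 2) + 1 ∨ S.card ≤ k + 1 := by
  set z := S.min' hne
  have hz : z ∈ S := S.min'_mem hne
  have hcard : {b ∈ S | z < b}.card + 1 = S.card := card_filter_min'_lt_add_one hne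
  by_cases hbase : ∃ e, .inl e ∈ colors M k φ ψ S
  · obtain ⟨e, he⟩ := hbase
    have h₁ := card_filter_lt_le_mul_card_upLevels hM hS hz hdown (m - 2) fun t => by
      have := card_ballDigits_lt hM hS hφ hC z t
      omega
    have h₂ := card_upLevels_le hM hS hψ hC he (by simp) hz
    have h₃ := Nat.mul_le_mul_left (m - 2) h₂
    left
    rw [mul_comm d]
    omega
  · have h₁ := card_filter_lt_le_mul_card_upLevels hM hS hz hdown 1
      (card_ballDigits_le_two hM hS (not_exists.1 hbase) z)
    have h₂ := (card_le_card (upLevels_subset_range hS hz)).trans_eq (card_range k)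
    right
    omega

theorem card_le_of_forall_up_not_mem {m : ℕ} (hM : 0 < M) (hS : ∀ x ∈ S, x < M ^ k)
    (hφ : ∀ A ⊆ range M, A.card = m → 3 ≤ ((powersetCard 3 A).image φ).card)
    (hψ : ∀ J ⊆ range k, ((powersetCard 2 J).image ψ).card ≤ 1 → J.card ≤ d)
    (hC : (colors M k φ ψ S).card ≤ 2) (hne : S.Nonempty)
    (hup : ∀ e, .inr (.inl e) ∉ colors M k φ ψ S) :
    S.card ≤ d * (m - 2) + 1 ∨ S.card ≤ k + 1 := by
  set z := S.max' hne
  have hz : z ∈ S := S.max'_mem hne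
  have hcard : {b ∈ S | b < z}.card + 1 = S.card := card_filter_lt_max'_add_one hne
  by_cases hbase : ∃ e, .inl e ∈ colors M k φ ψ S
  · obtain ⟨e, he⟩ := hbase
    have h₁ := card_filter_gt_le_mul_card_downLevels hM hS hz hup (m - 2) fun t => by
      have := card_ballDigits_lt hM hS hφ hC z t
      omega
    have h₂ := card_downLevels_le hM hS hψ hC he (by simp) hz
    have h₃ := Nat.mul_le_mul_left (m - 2) h₂
    left
    rw [mul_comm d]
    omega
  · have h₁ := card_filter_gt_le_mul_card_downLevels hM hS hz hup 1
      (card_ballDigits_le_two hM hS (not_exists.1 hbase) z)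
    have h₂ := (card_le_card (downLevels_subset_range hS hz)).trans_eq (card_range k)
    right
    omega

theorem three_le_card_colors {m n : ℕ} (hM : 0 < M) (hS : ∀ x ∈ S, x < M ^ k)
    (hφ : ∀ A ⊆ range M, A.card = m → 3 ≤ ((powersetCard 3 A).image φ).card)
    (hψ : ∀ J ⊆ range k, ((powersetCard 2 J).image ψ).card ≤ 1 → J.card ≤ d)
    (hSn : S.card = n) (h₁ : k + 1 < n) (h₂ : d * (m - 2) + 1 < n) (h₃ : 2 ^ (2 * d) < n) :
    3 ≤ (colors M k φ ψ S).card := by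
  by_contra! hC
  replace hC : (colors M k φ ψ S).card ≤ 2 := by omega
  have hne : S.Nonempty := card_pos.1 (by omega)
  by_cases hup : ∃ x, .inr (.inl x) ∈ colors M k φ ψ S
  · by_cases hdown : ∃ y, .inr (.inr y) ∈ colors M k φ ψ S
    · obtain ⟨x, hx⟩ := hup
      obtain ⟨y, hy⟩ := hdown
      have := card_le_of_up_mem_of_down_mem hM hS hψ hC hx hy
      omega
    · have := card_le_of_forall_down_not_mem hM hS hφ hψ hC hne (not_exists.1 hdown)
      omega
  · have := card_le_of_forall_up_not_mem hM hS hφ hψ hC hne (not_exists.1 hup)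
    omega

end Coloring

theorem hasColoring_pow {M m q k d n : ℕ} (hM : hasColoring M m q 3)
    (hψ : ∃ ψ : Finset ℕ → Fin 3, ∀ J ⊆ range k, ((powersetCard 2 J).image ψ).card ≤ 1 → J.card ≤ d)
    (h₁ : k + 1 < n) (h₂ : d * (m - 2) + 1 < n) (h₃ : 2 ^ (2 * d) < n) :
    hasColoring (M ^ k) n (q + 6) 3 := by
  obtain ⟨φ, hφ⟩ := hM
  obtain ⟨ψ, hψ⟩ := hψ
  refine hasColoring_of_embedding (Fintype.equivFinOfCardEq (by simp)).toEmbedding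
    (stepColoring M k φ ψ) fun S hS hSn => ?_
  rcases M.eq_zero_or_pos with rfl | hM
  · have := (card_le_card hS).trans_eq (card_range _)
    have : 0 ^ k ≤ 1 := by rcases k with _ | k <;> simp
    omega
  · exact three_le_card_colors hM (fun x hx => mem_range.1 (hS hx)) hφ hψ hSn h₁ h₂ h₃

end SteppingUp

section Estimates

open Real

theorem sixteen_mul_floor_pow_four_le (n : ℕ) : 16 * ⌊(n : ℝ) ^ ((1 : ℝ) / 4) / 2⌋₊ ^ 4 ≤ n := by
  set k := ⌊(n : ℝ) ^ ((1 : ℝ) / 4) / 2⌋₊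
  have hk : 2 * (k : ℝ) ≤ (n : ℝ) ^ ((1 : ℝ) / 4) := by
    have := Nat.floor_le (a := (n : ℝ) ^ ((1 : ℝ) / 4) / 2) (by positivity)
    linarith
  have h4 : (2 * (k : ℝ)) ^ 4 ≤ (n : ℝ) := calc
    (2 * (k : ℝ)) ^ 4 ≤ ((n : ℝ) ^ ((1 : ℝ) / 4)) ^ 4 := by gcongr
    _ = (n : ℝ) := by rw [← rpow_natCast, ← rpow_mul n.cast_nonneg]; norm_num
  have : ((16 * k ^ 4 : ℕ) : ℝ) ≤ n := by push_cast; linarith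
  exact_mod_cast this

theorem floor_div_logb_mul_le {n d : ℕ} (hd : 2 ^ d ≤ n) :
    ⌊(n : ℝ) / logb 2 n⌋₊ * d ≤ n := by
  rcases d.eq_zero_or_pos with rfl | hd0
  · simp
  have hn : (0 : ℝ) < n := by exact_mod_cast (Nat.one_le_two_pow.trans hd)
  have hdL : (d : ℝ) ≤ logb 2 n := by
    rw [le_logb_iff_rpow_le one_lt_two hn, rpow_natCast]
    exact_mod_cast hd
  have hL : 0 < logb 2 n := lt_of_lt_of_le (by exact_mod_cast hd0) hdL
  have : (⌊(n : ℝ) / logb 2 n⌋₊ : ℝ) * d ≤ n := calc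
    (⌊(n : ℝ) / logb 2 n⌋₊ : ℝ) * d ≤ (n / logb 2 n) * logb 2 n := by
      gcongr
      exact Nat.floor_le (by positivity)
    _ = n := div_mul_cancel₀ _ hL.ne'
  exact_mod_cast this

theorem one_le_floor_div_logb {n : ℕ} (hn : 2 ≤ n) : 1 ≤ ⌊(n : ℝ) / logb 2 n⌋₊ := by
  have hn0 : (0 : ℝ) < n := by positivity
  have hL : 0 < logb 2 n := logb_pos one_lt_two (by exact_mod_cast hn)
  rw [Nat.one_le_floor_iff, one_le_div hL, logb_le_iff_le_rpow one_lt_two hn0, rpow_natCast]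
  exact_mod_cast (Nat.lt_two_pow_self).le

theorem two_pow_lt_of_sixteen_mul_pow_four_le {n k : ℕ} (hk : 16 * k ^ 4 ≤ n) (hn : 5 ≤ n) :
    2 ^ (2 * (2 * Nat.log 2 k + 1)) < n := by
  rcases k.eq_zero_or_pos with rfl | hk0
  · simp
    omega
  have h := Nat.pow_le_pow_left (Nat.pow_log_le_self 2 hk0.ne') 4
  have hk4 : 0 < k ^ 4 := by positivity
  calc 2 ^ (2 * (2 * Nat.log 2 k + 1)) = 4 * (2 ^ Nat.log 2 k) ^ 4 := by ring
    _ < n := by omega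

theorem mul_sub_two_add_one_lt {m d n : ℕ} (hmd : m * d ≤ n) (hd : 0 < d) (hn : 1 < n) :
    d * (m - 2) + 1 < n := by
  rcases lt_or_ge m 2 with hm | hm
  · rw [Nat.sub_eq_zero_of_le hm.le, mul_zero]
    omega
  · have : d * (m - 2) + 2 * d = m * d := by
      rw [mul_comm 2 d, ← mul_add, Nat.sub_add_cancel hm, mul_comm]
    omega

end Estimates

/-- for n > q ≥ 9, f(n;q,3) ≥ f(⌊n/log₂ n⌋; q-6, 3)^{⌊n^{1/4}/2⌋}. -/
theorem stmt_10 (n q : ℕ) (hq : 9 ≤ q) (hn : q < n) :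
    (f ⌊(n : ℝ) / Real.logb 2 (n : ℝ)⌋₊ (q - 6) 3) ^ ⌊(n : ℝ) ^ ((1 : ℝ) / 4) / 2⌋₊
      ≤ f n q 3 := by
  set m := ⌊(n : ℝ) / Real.logb 2 (n : ℝ)⌋₊
  set k := ⌊(n : ℝ) ^ ((1 : ℝ) / 4) / 2⌋₊
  set d := 2 * Nat.log 2 k + 1
  have hk : 16 * k ^ 4 ≤ n := sixteen_mul_floor_pow_four_le n
  have hd : 2 ^ (2 * d) < n := two_pow_lt_of_sixteen_mul_pow_four_le hk (by omega)
  have hmd : m * d ≤ n :=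
    floor_div_logb_mul_le ((Nat.pow_le_pow_right two_pos (by omega)).trans hd.le)
  have h₁ : k + 1 < n := by
    have : k ≤ k ^ 4 := Nat.le_self_pow (by norm_num) k
    omega
  have h₂ : d * (m - 2) + 1 < n := mul_sub_two_add_one_lt hmd (by omega) (by omega)
  have hcol := SteppingUp.hasColoring_pow
    (hasColoring_f (one_le_floor_div_logb (by omega)) (by omega : 0 < q - 6) (by norm_num))
    (exists_pairColoring k) h₁ h₂ hd
  rw [Nat.sub_add_cancel (by omega)] at hcol
  exact le_f (by norm_num) hcol
end

section
/- For all integers n > 3, f(n;3,3) > 2^{n²/24}; that is, there exists a 3-coloring of the triples of a set of size greater than 2^{n²/24} such that every n-element subset contains triples of at least three distinct colors. -/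
open Finset

section Counting

variable {α β : Type*} [Fintype α] [DecidableEq α] [Fintype β] [DecidableEq β]

lemma card_filter_forall_mem_ne (s : Finset α) (c : β) :
    #{g : α → β | ∀ x ∈ s, g x ≠ c} =
      (Fintype.card β - 1) ^ #s * Fintype.card β ^ (Fintype.card α - #s) := by
  have : ({g : α → β | ∀ x ∈ s, g x ≠ c} : Finset (α → β)) =
      Fintype.piFinset fun x => if x ∈ s then univ.erase c else univ := by
    ext g
    simp only [mem_filter, mem_univ, true_and, Fintype.mem_piFinset]
    refine forall_congr' fun x => ?_
    split_ifs <;> simp [*]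
  simp only [this, Fintype.card_piFinset, apply_ite card, card_erase_of_mem (mem_univ c),
    card_univ]
  rw [prod_ite]
  simp [filter_not, card_sdiff_of_subset]

lemma exists_forall_surjOn_of_card_lt [Nonempty β] {ι : Type*}
    (I : Finset ι) (B : ι → Finset α) (k : ℕ) (hB : ∀ i ∈ I, #(B i) = k)
    (h : #I * Fintype.card β * (Fintype.card β - 1) ^ k < Fintype.card β ^ k) :
    ∃ g : α → β, ∀ i ∈ I, Set.SurjOn g (B i) Set.univ := by
  set q := Fintype.card β
  let avoiding (i : ι) (c : β) : Finset (α → β) := {g | ∀ x ∈ B i, g x ≠ c}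
  -- scaled by `q ^ k` so that the truncated `Fintype.card α - k` disappears
  have card_avoiding :
      ∀ i ∈ I, ∀ c, #(avoiding i c) * q ^ k = (q - 1) ^ k * q ^ Fintype.card α := by
    intro i hi c
    rw [card_filter_forall_mem_ne, hB i hi, mul_assoc, ← pow_add,
      Nat.sub_add_cancel ((hB i hi) ▸ card_le_univ (B i))]
  let bad : Finset (α → β) := I.biUnion fun i => univ.biUnion (avoiding i)
  have card_bad : #bad * q ^ k < q ^ k * q ^ Fintype.card α :=
    calc #bad * q ^ k ≤ (∑ i ∈ I, ∑ c, #(avoiding i c)) * q ^ k := by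
          gcongr
          exact card_biUnion_le.trans (sum_le_sum fun i _ => card_biUnion_le)
      _ = #I * q * ((q - 1) ^ k * q ^ Fintype.card α) := by
          rw [sum_mul, sum_congr rfl fun i hi => by
            rw [sum_mul, sum_congr rfl fun c _ => card_avoiding i hi c]]
          simp only [sum_const, card_univ, smul_eq_mul, q]
          ring
      _ < q ^ k * q ^ Fintype.card α := by
          rw [← mul_assoc]
          exact Nat.mul_lt_mul_of_pos_right h (by positivity)
  obtain ⟨g, -, hg⟩ := exists_mem_notMem_of_card_lt_card (s := bad) (t := univ) (by
    rw [card_univ, Fintype.card_fun]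
    exact Nat.lt_of_mul_lt_mul_right (a := q ^ k) (by rwa [mul_comm (q ^ _)]))
  simp only [bad, avoiding, mem_biUnion, mem_univ, mem_filter, true_and, not_exists, not_and,
    not_forall, not_not, exists_prop] at hg
  exact ⟨g, fun i hi c _ => hg i hi c⟩

end Counting

lemma hasColoring_of_choose_mul_lt {N n q : ℕ} [NeZero q]
    (h : N.choose n * q * (q - 1) ^ n.choose 3 < q ^ n.choose 3) : hasColoring N n q q := by
  set T := (range N).powersetCard 3
  have triples_subset : ∀ A ⊆ range N, A.powersetCard 3 ⊆ T := fun _ => powersetCard_mono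
  obtain ⟨g, hg⟩ := exists_forall_surjOn_of_card_lt (β := Fin q) ((range N).powersetCard n)
    (fun A => (A.powersetCard 3).subtype (· ∈ T)) (n.choose 3)
    (fun A hA => by
      rw [mem_powersetCard] at hA
      rw [card_subtype, filter_true_of_mem (triples_subset A hA.1), card_powersetCard, hA.2])
    (by simpa using h)
  refine ⟨fun s => if hs : s ∈ T then g ⟨s, hs⟩ else 0, fun A hA hAn => ?_⟩
  suffices univ ⊆ (A.powersetCard 3).image fun s => if hs : s ∈ T then g ⟨s, hs⟩ else 0 by
    simpa using card_le_card this
  intro c _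
  obtain ⟨x, hx, rfl⟩ := hg A (mem_powersetCard.2 ⟨hA, hAn⟩) (Set.mem_univ c)
  exact mem_image.2 ⟨x, mem_subtype.1 hx, dif_pos x.2⟩

lemma two_pow_add_le_three_pow {a t : ℕ} (h : 7 * a ≤ 4 * t) : 2 ^ (a + t) ≤ 3 ^ t := by
  refine (Nat.pow_le_pow_iff_left (by norm_num : 7 ≠ 0)).1 ?_
  calc (2 ^ (a + t)) ^ 7 ≤ 2 ^ (11 * t) := by
        rw [← pow_mul]; exact Nat.pow_le_pow_right (by norm_num) (by omega)
    _ = 2048 ^ t := by rw [pow_mul]; norm_num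
    _ ≤ 2187 ^ t := Nat.pow_le_pow_left (by norm_num) t
    _ = (3 ^ t) ^ 7 := by rw [← pow_mul, mul_comm, pow_mul]; norm_num

lemma seven_mul_le_four_mul_choose_three {n : ℕ} (hn : 8 ≤ n) :
    7 * ((n ^ 2 / 24 + 1) * n + 2) ≤ 4 * n.choose 3 := by
  obtain ⟨k, rfl⟩ := Nat.exists_eq_add_of_le' hn
  have h6 : 6 * (k + 8).choose 3 = (k + 8) * (k + 7) * (k + 6) := by
    rw [show 6 = Nat.factorial 3 from rfl, ← Nat.descFactorial_eq_factorial_mul_choose]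
    simp only [Nat.descFactorial_succ, Nat.reduceSubDiff, Nat.add_one_sub_one, tsub_zero,
      Nat.descFactorial_zero, mul_one]
    ring
  have h24 : 24 * ((k + 8) ^ 2 / 24) ≤ (k + 8) ^ 2 := Nat.mul_div_le _ _
  nlinarith

lemma choose_two_pow_mul_lt {n : ℕ} (hn : 3 < n) :
    (2 ^ (n ^ 2 / 24 + 1)).choose n * 3 * 2 ^ n.choose 3 < 3 ^ n.choose 3 := by
  obtain hn8 | hn8 := lt_or_ge n 8
  · interval_cases n <;> decide
  set m := n ^ 2 / 24 + 1
  calc (2 ^ m).choose n * 3 * 2 ^ n.choose 3 < (2 ^ m) ^ n * 4 * 2 ^ n.choose 3 := by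
        gcongr ?_ * _
        exact Nat.mul_lt_mul_of_le_of_lt (Nat.choose_le_pow _ _) (by norm_num) (by positivity)
    _ = 2 ^ ((m * n + 2) + n.choose 3) := by ring
    _ ≤ 3 ^ n.choose 3 := two_pow_add_le_three_pow (seven_mul_le_four_mul_choose_three hn8)

/-- for n > 3, f(n;3,3) > 2^{n²/24}. -/
theorem stmt_13 (n : ℕ) (hn : 3 < n) :
    ∃ N : ℕ, (2 : ℝ) ^ ((n : ℝ) ^ 2 / 24) < N ∧ hasColoring N n 3 3 := by
  refine ⟨2 ^ (n ^ 2 / 24 + 1), ?_, hasColoring_of_choose_mul_lt (choose_two_pow_mul_lt hn)⟩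
  have hexp : (n : ℝ) ^ 2 / 24 < (n ^ 2 / 24 + 1 : ℕ) := by
    have hfloor := Nat.floor_div_eq_div (K := ℝ) (n ^ 2) 24
    push_cast at hfloor ⊢
    exact hfloor ▸ Nat.lt_floor_add_one _
  calc (2 : ℝ) ^ ((n : ℝ) ^ 2 / 24) < (2 : ℝ) ^ ((n ^ 2 / 24 + 1 : ℕ) : ℝ) :=
        Real.rpow_lt_rpow_of_exponent_lt one_lt_two hexp
    _ = (2 ^ (n ^ 2 / 24 + 1) : ℕ) := by rw [Real.rpow_natCast]; push_cast; rfl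
end

section
/- For every q ≥ 3 there is a constant c = c(q) > 0 such that f(n;q,3) > 2^{c n²} for all sufficiently large n: there exists a q-coloring of the triples of a set of size exceeding 2^{c n²} such that every n-element subset contains triples of at least three distinct colors. -/
/-!
Color the triples of an `N`-set uniformly at random with `q` colors. A fixed `n`-set sees at most
two colors only if its `B = C(n,3)` triples all avoid `q - 2` colors, which for a given pair of
colors happens with probability `(2/q)^B`; a union bound over the `q²` pairs and the `C(N,n) ≤ N^n`
sets leaves a good coloring as soon as `N^n q² 2^B < q^B`. Since `B ~ n³/6` and
`q/2 ≥ 3/2 > √2`, this holds for `N = 2^⌊n²/50⌋` once `n` is large.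
-/

open Finset Fintype

theorem Finset.exists_subset_pair_of_card_le_two {β : Type*} [DecidableEq β] [Nonempty β]
    {s : Finset β} (h : #s ≤ 2) : ∃ a b : β, s ⊆ {a, b} := by
  obtain h0 | h1 | h2 : #s = 0 ∨ #s = 1 ∨ #s = 2 := by omega
  · obtain ⟨a⟩ := ‹Nonempty β›
    exact ⟨a, a, by simp [card_eq_zero.1 h0]⟩
  · obtain ⟨a, rfl⟩ := card_eq_one.1 h1
    exact ⟨a, a, by simp⟩
  · obtain ⟨a, b, -, rfl⟩ := card_eq_two.1 h2
    exact ⟨a, b, subset_rfl⟩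

section Counting

variable {ι α β : Type*} [Fintype α] [DecidableEq α] [Fintype β] [DecidableEq β]

-- Stated multiplied out by `card β ^ #s`, which avoids the truncated `card α - #s`.
theorem card_filter_forall_mem_mul_pow (s : Finset α) (t : Finset β) :
    #{f : α → β | ∀ x ∈ s, f x ∈ t} * card β ^ #s = #t ^ #s * card β ^ card α := by
  have hpi : ({f : α → β | ∀ x ∈ s, f x ∈ t} : Finset _) =
      piFinset fun x => if x ∈ s then t else univ := by
    ext f
    simp only [mem_filter, mem_univ, true_and, mem_piFinset]
    exact forall_congr' fun x => by split_ifs <;> simp [*]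
  rw [hpi, card_piFinset]
  simp only [apply_ite card, card_univ, prod_ite, prod_const, filter_univ_mem, ← compl_filter]
  rw [mul_assoc, ← pow_add, card_compl_add_card]

theorem exists_forall_two_lt_card_image [Nonempty β] (I : Finset ι) (P : ι → Finset α) (k : ℕ)
    (hP : ∀ i ∈ I, #(P i) = k) (h : #I * card β ^ 2 * 2 ^ k < card β ^ k) :
    ∃ f : α → β, ∀ i ∈ I, 2 < #((P i).image f) := by
  by_contra! hbad
  set bad : ι → β × β → Finset (α → β) :=
    fun i ab => {f | ∀ x ∈ P i, f x ∈ ({ab.1, ab.2} : Finset β)}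
  have hcover : (univ : Finset (α → β)) ⊆ I.biUnion fun i => univ.biUnion (bad i) := by
    intro f _
    obtain ⟨i, hi, hf⟩ := hbad f
    obtain ⟨a, b, hab⟩ := exists_subset_pair_of_card_le_two (s := (P i).image f) hf
    simp only [mem_biUnion, mem_univ, true_and, Prod.exists]
    exact ⟨i, hi, a, b, by simpa [bad] using fun x hx => hab (mem_image_of_mem f hx)⟩
  have hbad_card : ∀ i ∈ I, ∀ ab, #(bad i ab) * card β ^ k ≤ 2 ^ k * card β ^ card α := by
    intro i hi ab
    rw [← hP i hi, card_filter_forall_mem_mul_pow]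
    gcongr
    exact card_le_two
  have hcount : card β ^ card α * card β ^ k ≤ #I * card β ^ 2 * 2 ^ k * card β ^ card α :=
    calc card β ^ card α * card β ^ k = #(univ : Finset (α → β)) * card β ^ k := by simp
    _ ≤ (∑ i ∈ I, ∑ ab : β × β, #(bad i ab)) * card β ^ k := by
      gcongr
      exact (card_le_card hcover).trans
        (card_biUnion_le.trans (sum_le_sum fun i _ => card_biUnion_le))
    _ = ∑ i ∈ I, ∑ ab : β × β, #(bad i ab) * card β ^ k := by simp only [sum_mul]
    _ ≤ ∑ i ∈ I, ∑ ab : β × β, 2 ^ k * card β ^ card α :=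
      sum_le_sum fun i hi => sum_le_sum fun ab _ => hbad_card i hi ab
    _ = #I * card β ^ 2 * 2 ^ k * card β ^ card α := by simp [card_prod]; ring
  have := Nat.mul_lt_mul_of_pos_right h (pow_pos (card_pos (α := β)) (card α))
  linarith

end Counting

theorem exists_coloring_powersetCard {γ β : Type*} [Fintype γ] [DecidableEq γ] [Fintype β]
    [DecidableEq β] [Nonempty β] (n r : ℕ)
    (h : (card γ).choose n * card β ^ 2 * 2 ^ n.choose r < card β ^ n.choose r) :
    ∃ f : Finset γ → β, ∀ A : Finset γ, #A = n → 2 < #((A.powersetCard r).image f) := by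
  obtain ⟨f, hf⟩ := exists_forall_two_lt_card_image (powersetCard n (univ : Finset γ))
    (powersetCard r) (n.choose r) (fun A hA => by rw [card_powersetCard, (mem_powersetCard.1 hA).2])
    (by simpa using h)
  exact ⟨f, fun A hA => hf A (mem_powersetCard.2 ⟨subset_univ A, hA⟩)⟩

theorem hasColoring_of_fin {N n q t : ℕ} (f : Finset (Fin N) → Fin q)
    (hf : ∀ A : Finset (Fin N), #A = n → t ≤ #((A.powersetCard 3).image f)) :
    hasColoring N n q t := by
  refine ⟨fun s => f (s.preimage Fin.valEmbedding Fin.valEmbedding.injective.injOn),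
    fun A hA hcard => ?_⟩
  have hrange : range N = (univ : Finset (Fin N)).map Fin.valEmbedding := by
    simp [Nat.Iio_eq_range]
  obtain ⟨B, -, rfl⟩ := subset_map_iff.1 (hA.trans_eq hrange)
  rw [powersetCard_map, map_eq_image, image_image]
  have hχ : (fun s => f (s.preimage Fin.valEmbedding Fin.valEmbedding.injective.injOn)) ∘
      (mapEmbedding Fin.valEmbedding).toEmbedding = f :=
    funext fun u => congrArg f (preimage_map _ u)
  rw [hχ]
  exact hf B (by simpa using hcard)

theorem two_pow_lt_three_pow {a b : ℕ} (hb : 0 < b) (h : 2 * a ≤ 3 * b) : 2 ^ a < 3 ^ b := by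
  refine lt_of_pow_lt_pow_left₀ 2 (by positivity) ?_
  calc (2 ^ a) ^ 2 ≤ 8 ^ b := by
        rw [← pow_mul, show 8 = 2 ^ 3 by rfl, ← pow_mul]
        exact Nat.pow_le_pow_right (by norm_num) (by omega)
    _ < 9 ^ b := Nat.pow_lt_pow_left (by norm_num) hb.ne'
    _ = (3 ^ b) ^ 2 := by rw [← pow_mul, mul_comm, pow_mul]; rfl

theorem two_pow_mul_sq_mul_two_pow_lt {q e B : ℕ} (hq : 3 ≤ q) (h : 2 * e + 6 ≤ B) :
    2 ^ e * q ^ 2 * 2 ^ B < q ^ B :=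
  calc 2 ^ e * q ^ 2 * 2 ^ B = q ^ 2 * 2 ^ (e + B) := by ring
    _ < q ^ 2 * 3 ^ (B - 2) := by
      gcongr
      exact two_pow_lt_three_pow (by omega) (by omega)
    _ ≤ q ^ 2 * q ^ (B - 2) := by gcongr
    _ = q ^ B := by rw [← pow_add]; congr 1; omega

theorem two_mul_div_mul_add_six_le_choose_three {n : ℕ} (hn : 1000 ≤ n) :
    2 * (n ^ 2 / 50 * n) + 6 ≤ n.choose 3 := by
  have h6 : 6 * n.choose 3 = n * (n - 1) * (n - 2) := by
    rw [show 6 = Nat.factorial 3 by rfl, ← Nat.descFactorial_eq_factorial_mul_choose]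
    simp [Nat.descFactorial]; ring
  have h50 : n ^ 2 / 50 * 50 ≤ n ^ 2 := Nat.div_mul_le_self _ _
  obtain ⟨k, rfl⟩ : ∃ k, n = k + 1000 := ⟨n - 1000, by omega⟩
  have h1 : k + 1000 - 1 = k + 999 := by omega
  have h2 : k + 1000 - 2 = k + 998 := by omega
  rw [h1, h2] at h6
  nlinarith [Nat.mul_le_mul_right (k + 1000) h50]

theorem two_rpow_sq_div_hundred_lt {n : ℕ} (hn : 10 ≤ n) :
    (2 : ℝ) ^ (1 / 100 * (n : ℝ) ^ 2) < ((2 ^ (n ^ 2 / 50) : ℕ) : ℝ) := by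
  have hm : n ^ 2 < 100 * (n ^ 2 / 50) := by
    have : 100 ≤ n ^ 2 := by nlinarith
    omega
  rw [show ((2 ^ (n ^ 2 / 50) : ℕ) : ℝ) = (2 : ℝ) ^ ((n ^ 2 / 50 : ℕ) : ℝ) by
    rw [Real.rpow_natCast]; push_cast; rfl]
  apply Real.rpow_lt_rpow_of_exponent_lt one_lt_two
  have : ((n ^ 2 : ℕ) : ℝ) < ((100 * (n ^ 2 / 50) : ℕ) : ℝ) := by exact_mod_cast hm
  push_cast at this
  linarith

/-- for every q ≥ 3 there is c > 0 with f(n;q,3) > 2^{cn²} for all large n. -/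
theorem stmt_16 (q : ℕ) (hq : 3 ≤ q) :
    ∃ c : ℝ, 0 < c ∧ ∃ n₀ : ℕ, ∀ n : ℕ, n₀ < n →
      ∃ N : ℕ, (2 : ℝ) ^ (c * (n : ℝ) ^ 2) < N ∧ hasColoring N n q 3 := by
  refine ⟨1 / 100, by norm_num, 1000, fun n hn =>
    ⟨2 ^ (n ^ 2 / 50), two_rpow_sq_div_hundred_lt (by omega), ?_⟩⟩
  have : NeZero q := ⟨by omega⟩
  have hcount : (2 ^ (n ^ 2 / 50)).choose n * q ^ 2 * 2 ^ n.choose 3 < q ^ n.choose 3 :=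
    calc (2 ^ (n ^ 2 / 50)).choose n * q ^ 2 * 2 ^ n.choose 3
        ≤ 2 ^ (n ^ 2 / 50 * n) * q ^ 2 * 2 ^ n.choose 3 := by
          rw [pow_mul]
          gcongr
          exact Nat.choose_le_pow _ _
      _ < q ^ n.choose 3 := two_pow_mul_sq_mul_two_pow_lt hq
          (two_mul_div_mul_add_six_le_choose_three (by omega))
  obtain ⟨f, hf⟩ := exists_coloring_powersetCard (γ := Fin (2 ^ (n ^ 2 / 50))) (β := Fin q) n 3
    (by simpa only [Fintype.card_fin] using hcount)
  exact hasColoring_of_fin f hf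
end

section
/- Let δ be any function on pairs of distinct elements of a linearly ordered finite set V satisfying: for all u < v < w, δ(u,v) ≠ δ(v,w), and for v₁ < ⋯ < v_r, δ(v₁,v_r) = max_j δ(v_j,v_{j+1}). Then for any v₁ < ⋯ < v_n, if δ_w = max_{1≤i≤n-1} δ(v_i, v_{i+1}), then δ_w > δ(v_i, v_{i+1}) for all i ≠ w, i.e., the maximum among consecutive δ-values is attained exactly once. -/
/-!
If two consecutive gaps `a < b` both attained the maximum `M`, Property II applied to
`v (a+1) < ⋯ < v (b+1)` would give `δ (v (a+1)) (v (b+1)) = M = δ (v a) (v (a+1))`,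
contradicting Property I for the triple `v a < v (a+1) < v (b+1)`.
-/

section SteppingUp

variable {V L : Type*} [LinearOrder V] [LinearOrder L]

def SteppingUpPropertyI (δ : V → V → L) : Prop :=
  ∀ u v w : V, u < v → v < w → δ u v ≠ δ v w

def SteppingUpPropertyII (δ : V → V → L) : Prop :=
  ∀ (r : ℕ) (x : ℕ → V), 2 ≤ r → (∀ i j, i < j → j < r → x i < x j) →
    (∀ j, j < r - 1 → δ (x j) (x (j + 1)) ≤ δ (x 0) (x (r - 1))) ∧
      ∃ j, j < r - 1 ∧ δ (x 0) (x (r - 1)) = δ (x j) (x (j + 1))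

variable {δ : V → V → L} {n : ℕ} {v : ℕ → V}

theorem SteppingUpPropertyII.on_interval (hII : SteppingUpPropertyII δ)
    (hmono : ∀ i j, i < j → j < n → v i < v j) {a b : ℕ} (hab : a < b) (hb : b < n) :
    (∀ j, a ≤ j → j < b → δ (v j) (v (j + 1)) ≤ δ (v a) (v b)) ∧
      ∃ j, a ≤ j ∧ j < b ∧ δ (v a) (v b) = δ (v j) (v (j + 1)) := by
  obtain ⟨hle, k, hk, hkeq⟩ := hII (b - a + 1) (fun k => v (a + k)) (by omega)
    (fun i j hij hj => hmono _ _ (by omega) (by omega))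
  have hlast : a + (b - a + 1 - 1) = b := by omega
  simp only [hlast, Nat.add_zero] at hle hkeq
  refine ⟨fun j haj hjb => ?_, a + k, by omega, by omega, hkeq⟩
  have hj : a + (j - a) = j := by omega
  simpa only [← Nat.add_assoc, hj] using hle (j - a) (by omega)

theorem not_two_maximal_gaps (hI : SteppingUpPropertyI δ) (hII : SteppingUpPropertyII δ)
    (hmono : ∀ i j, i < j → j < n → v i < v j) {a b : ℕ} (hab : a < b) (hb : b < n - 1)
    (hmax : ∀ m, m < n - 1 → δ (v m) (v (m + 1)) ≤ δ (v a) (v (a + 1)))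
    (heq : δ (v b) (v (b + 1)) = δ (v a) (v (a + 1))) : False := by
  obtain ⟨hle, k, hak, hkb, hkeq⟩ :=
    hII.on_interval hmono (a := a + 1) (b := b + 1) (by omega) (by omega)
  have hge : δ (v a) (v (a + 1)) ≤ δ (v (a + 1)) (v (b + 1)) :=
    heq ▸ hle b (by omega) (by omega)
  have hle' : δ (v (a + 1)) (v (b + 1)) ≤ δ (v a) (v (a + 1)) :=
    hkeq ▸ hmax k (by omega)
  exact hI _ _ _ (hmono _ _ (by omega) (by omega)) (hmono _ _ (by omega) (by omega))
    (le_antisymm hge hle')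

end SteppingUp

theorem existsUnique_strict_max_of_lt {L : Type*} [LinearOrder L] (f : ℕ → L) {m : ℕ}
    (hm : 0 < m)
    (h : ∀ a b, a < b → b < m → (∀ i, i < m → f i ≤ f a) → f b = f a → False) :
    ∃! w, w < m ∧ ∀ i, i < m → i ≠ w → f i < f w := by
  obtain ⟨w, hw, hwmax⟩ := Finset.exists_max_image (Finset.range m) f ⟨0, by simpa⟩
  simp only [Finset.mem_range] at hw hwmax
  refine ⟨w, ⟨hw, fun i hi hiw => (hwmax i hi).lt_of_ne fun he => ?_⟩, ?_⟩
  · rcases hiw.lt_or_gt with hiw | hwi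
    · exact h i w hiw hw (fun j hj => he ▸ hwmax j hj) he.symm
    · exact h w i hwi hi hwmax he
  · rintro w' ⟨hw', hdom⟩
    by_contra hne
    exact (hdom w hw (Ne.symm hne)).not_ge (hwmax w' hw')

theorem stmt_19_general {V L : Type*} [LinearOrder V] [LinearOrder L]
    (δ : V → V → L)
    (hI : ∀ u v w : V, u < v → v < w → δ u v ≠ δ v w)
    (hII : ∀ (r : ℕ) (x : ℕ → V), 2 ≤ r → (∀ i j, i < j → j < r → x i < x j) →
      (∀ j, j < r - 1 → δ (x j) (x (j + 1)) ≤ δ (x 0) (x (r - 1))) ∧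
        ∃ j, j < r - 1 ∧ δ (x 0) (x (r - 1)) = δ (x j) (x (j + 1)))
    (n : ℕ) (hn : 2 ≤ n) (v : ℕ → V)
    (hmono : ∀ i j, i < j → j < n → v i < v j) :
    ∃! w : ℕ, w < n - 1 ∧ ∀ i, i < n - 1 → i ≠ w →
      δ (v i) (v (i + 1)) < δ (v w) (v (w + 1)) :=
  existsUnique_strict_max_of_lt (fun i => δ (v i) (v (i + 1))) (by omega)
    fun _ _ hab hb hmax heq => not_two_maximal_gaps hI hII hmono hab hb hmax heq

/-- if δ satisfies Properties I and II of the stepping-up construction, then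
for any increasing sequence the maximum among consecutive δ-values is attained exactly once,
and it strictly dominates all the other consecutive δ-values. -/
theorem stmt_19 {V L : Type*} [LinearOrder V] [Fintype V] [LinearOrder L]
    (δ : V → V → L)
    (hI : ∀ u v w : V, u < v → v < w → δ u v ≠ δ v w)
    (hII : ∀ (r : ℕ) (x : ℕ → V), 2 ≤ r → (∀ i j, i < j → j < r → x i < x j) →
      (∀ j, j < r - 1 → δ (x j) (x (j + 1)) ≤ δ (x 0) (x (r - 1))) ∧
        ∃ j, j < r - 1 ∧ δ (x 0) (x (r - 1)) = δ (x j) (x (j + 1)))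
    (n : ℕ) (hn : 2 ≤ n) (v : ℕ → V)
    (hmono : ∀ i j, i < j → j < n → v i < v j) :
    ∃! w : ℕ, w < n - 1 ∧ ∀ i, i < n - 1 → i ≠ w →
      δ (v i) (v (i + 1)) < δ (v w) (v (w + 1)) :=
  stmt_19_general δ hI hII n hn v hmono
end
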